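/- arXiv:2407.18163 — 3 statements merged into one kernel-verified Lean document; each statement's English description precedes it below -/
import Mathlib

section
/- (Kantorovich–Rubinstein duality) Let μ, ν ∈ P_1(ℝ^d). Then W_1(μ,ν) = sup { ∫ f dμ − ∫ f dν : f : ℝ^d → ℝ is 1-Lipschitz }. -/
noncomputable section

open MeasureTheory ENNReal

/-- `ℝ^d` with its Euclidean structure. -/
abbrev Euc (d : ℕ) : Type := EuclideanSpace ℝ (Fin d)

/-- `γ` is a coupling of `μ` and `ν`: its first marginal is `μ`, its second marginal is `ν`. -/
def IsCoupling {α : Type*} [MeasurableSpace α] (γ : Measure (α × α)) (μ ν : Measure α) : Prop :=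
  γ.map Prod.fst = μ ∧ γ.map Prod.snd = ν

/-- The transport cost `∫ ‖x - y‖ dγ(x,y)` of a coupling `γ`. -/
def transportCost₁ {α : Type*} [MeasurableSpace α] [NormedAddCommGroup α]
    (γ : Measure (α × α)) : ℝ≥0∞ :=
  ∫⁻ z, (‖z.1 - z.2‖₊ : ℝ≥0∞) ∂γ

/-- The `1`-Wasserstein distance `W_1(μ,ν) = inf_{γ ∈ Γ(μ,ν)} ∫ ‖x-y‖ dγ`. -/
def wassersteinOne {α : Type*} [MeasurableSpace α] [NormedAddCommGroup α]
    (μ ν : Measure α) : ℝ≥0∞ :=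
  ⨅ γ : {γ : Measure (α × α) // IsCoupling γ μ ν}, transportCost₁ (γ : Measure (α × α))

/-- `μ` has a finite first moment, i.e. `μ ∈ P_1`. -/
def finiteFirstMoment {α : Type*} [MeasurableSpace α] [NormedAddCommGroup α]
    (μ : Measure α) : Prop :=
  ∫⁻ x, (‖x‖₊ : ℝ≥0∞) ∂μ ≠ ∞

section Aux

variable {d : ℕ}

lemma integrable_norm_of_ffm {μ : Measure (Euc d)} [IsProbabilityMeasure μ]
    (hμ : finiteFirstMoment μ) : Integrable (fun x : Euc d => ‖x‖) μ := by
  refine ⟨(continuous_norm.aestronglyMeasurable), ?_⟩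
  rw [hasFiniteIntegral_iff_ofReal (Filter.Eventually.of_forall fun x => norm_nonneg _)]
  have : ∀ x : Euc d, ENNReal.ofReal ‖x‖ = (‖x‖₊ : ℝ≥0∞) := fun x => (ofReal_norm x).trans (enorm_eq_nnnorm x)
  simp only [this]
  exact lt_top_iff_ne_top.2 hμ

lemma lipschitz_integrable {μ : Measure (Euc d)} [IsProbabilityMeasure μ]
    (hμ : finiteFirstMoment μ) {f : Euc d → ℝ} (hf : LipschitzWith 1 f) :
    Integrable f μ := by
  have hbound : ∀ x : Euc d, ‖f x‖ ≤ ‖f 0‖ + ‖x‖ := by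
    intro x
    have := hf.dist_le_mul x 0
    simp only [NNReal.coe_one, one_mul] at this
    have : |f x - f 0| ≤ ‖x‖ := by simpa [Real.dist_eq, dist_eq_norm] using this
    have h2 := abs_sub_abs_le_abs_sub (f x) (f 0)
    simp only [Real.norm_eq_abs]
    linarith
  have hint : Integrable (fun x : Euc d => ‖f 0‖ + ‖x‖) μ :=
    (integrable_const _).add (integrable_norm_of_ffm hμ)
  refine hint.mono (hf.continuous.aestronglyMeasurable) (Filter.Eventually.of_forall ?_)
  intro x
  have : ‖‖f 0‖ + ‖x‖‖ = ‖f 0‖ + ‖x‖ := by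
    rw [Real.norm_eq_abs, abs_of_nonneg (by positivity)]
  rw [this]; exact hbound x

/-- Any coupling of probability measures is a probability measure. -/
lemma IsCoupling.isProbabilityMeasure {α : Type*} [MeasurableSpace α]
    {γ : Measure (α × α)} {μ ν : Measure α} [IsProbabilityMeasure μ]
    (h : IsCoupling γ μ ν) : IsProbabilityMeasure γ := by
  constructor
  have h1 : γ.map Prod.fst Set.univ = μ Set.univ := by rw [h.1]
  rw [Measure.map_apply measurable_fst MeasurableSet.univ] at h1
  simpa using h1

lemma lintegral_fst_coupling {α : Type*} [MeasurableSpace α]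
    {γ : Measure (α × α)} {μ ν : Measure α} (h : IsCoupling γ μ ν)
    {g : α → ℝ≥0∞} (hg : Measurable g) :
    ∫⁻ z, g z.1 ∂γ = ∫⁻ x, g x ∂μ := by
  rw [← h.1, lintegral_map hg measurable_fst]

lemma lintegral_snd_coupling {α : Type*} [MeasurableSpace α]
    {γ : Measure (α × α)} {μ ν : Measure α} (h : IsCoupling γ μ ν)
    {g : α → ℝ≥0∞} (hg : Measurable g) :
    ∫⁻ z, g z.2 ∂γ = ∫⁻ x, g x ∂ν := by
  rw [← h.2, lintegral_map hg measurable_snd]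

lemma transportCost_le {d : ℕ} {γ : Measure (Euc d × Euc d)} {μ ν : Measure (Euc d)}
    (h : IsCoupling γ μ ν) :
    transportCost₁ γ ≤ (∫⁻ x, (‖x‖₊ : ℝ≥0∞) ∂μ) + ∫⁻ x, (‖x‖₊ : ℝ≥0∞) ∂ν := by
  have hb : ∀ z : Euc d × Euc d, ((‖z.1 - z.2‖₊ : ℝ≥0∞)) ≤ (‖z.1‖₊ : ℝ≥0∞) + ‖z.2‖₊ := by
    intro z
    have := nnnorm_sub_le z.1 z.2
    exact_mod_cast this
  calc transportCost₁ γ ≤ ∫⁻ z, ((‖z.1‖₊ : ℝ≥0∞) + ‖z.2‖₊) ∂γ := lintegral_mono hb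
    _ = (∫⁻ z, (‖z.1‖₊ : ℝ≥0∞) ∂γ) + ∫⁻ z, (‖z.2‖₊ : ℝ≥0∞) ∂γ := by
        exact lintegral_add_left (measurable_fst.nnnorm.coe_nnreal_ennreal) _
    _ = _ := by
        rw [lintegral_fst_coupling h measurable_nnnorm.coe_nnreal_ennreal,
          lintegral_snd_coupling h measurable_nnnorm.coe_nnreal_ennreal]

lemma prod_isCoupling {d : ℕ} (μ ν : Measure (Euc d)) [IsProbabilityMeasure μ]
    [IsProbabilityMeasure ν] : IsCoupling (μ.prod ν) μ ν := by
  constructor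
  · rw [Measure.map_fst_prod]; simp
  · rw [Measure.map_snd_prod]; simp

lemma wassersteinOne_ne_top {d : ℕ} {μ ν : Measure (Euc d)} [IsProbabilityMeasure μ]
    [IsProbabilityMeasure ν] (hμ : finiteFirstMoment μ) (hν : finiteFirstMoment ν) :
    wassersteinOne μ ν ≠ ∞ := by
  have : wassersteinOne μ ν ≤ transportCost₁ (μ.prod ν) :=
    iInf_le _ (⟨μ.prod ν, prod_isCoupling μ ν⟩ : {γ : Measure (Euc d × Euc d) // IsCoupling γ μ ν})
  refine ne_top_of_le_ne_top ?_ (this.trans (transportCost_le (prod_isCoupling μ ν)))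
  exact ENNReal.add_ne_top.2 ⟨hμ, hν⟩

/-- Easy direction: for any 1-Lipschitz f and coupling γ. -/
lemma easy_direction {d : ℕ} {γ : Measure (Euc d × Euc d)} {μ ν : Measure (Euc d)}
    [IsProbabilityMeasure μ] [IsProbabilityMeasure ν]
    (hμ : finiteFirstMoment μ) (hν : finiteFirstMoment ν)
    (h : IsCoupling γ μ ν) {f : Euc d → ℝ} (hf : LipschitzWith 1 f) :
    ENNReal.ofReal ((∫ x, f x ∂μ) - ∫ x, f x ∂ν) ≤ transportCost₁ γ := by
  have := h.isProbabilityMeasure (μ := μ) (ν := ν)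
  by_cases hfin : transportCost₁ γ = ∞
  · simp [hfin]
  -- the cost function is integrable w.r.t. γ
  have hcm : Measurable (fun z : Euc d × Euc d => ‖z.1 - z.2‖) :=
    (measurable_fst.sub measurable_snd).norm
  have hcint : Integrable (fun z : Euc d × Euc d => ‖z.1 - z.2‖) γ := by
    refine ⟨hcm.aestronglyMeasurable, ?_⟩
    rw [hasFiniteIntegral_iff_ofReal (Filter.Eventually.of_forall fun z => norm_nonneg _)]
    have : ∀ z : Euc d × Euc d, ENNReal.ofReal ‖z.1 - z.2‖ = (‖z.1 - z.2‖₊ : ℝ≥0∞) :=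
      fun z => (ofReal_norm _).trans (enorm_eq_nnnorm _)
    simp only [this]
    exact lt_top_iff_ne_top.2 hfin
  have hf1 : Integrable (fun z : Euc d × Euc d => f z.1) γ := by
    have : Integrable f (γ.map Prod.fst) := by rw [h.1]; exact lipschitz_integrable hμ hf
    exact (integrable_map_measure hf.continuous.aestronglyMeasurable
      measurable_fst.aemeasurable).1 this
  have hf2 : Integrable (fun z : Euc d × Euc d => f z.2) γ := by
    have : Integrable f (γ.map Prod.snd) := by rw [h.2]; exact lipschitz_integrable hν hf
    exact (integrable_map_measure hf.continuous.aestronglyMeasurable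
      measurable_snd.aemeasurable).1 this
  have key : (∫ x, f x ∂μ) - ∫ x, f x ∂ν ≤ ∫ z, ‖z.1 - z.2‖ ∂γ := by
    have e1 : ∫ x, f x ∂μ = ∫ z, f z.1 ∂γ := by
      rw [← h.1, integral_map measurable_fst.aemeasurable hf.continuous.aestronglyMeasurable]
    have e2 : ∫ x, f x ∂ν = ∫ z, f z.2 ∂γ := by
      rw [← h.2, integral_map measurable_snd.aemeasurable hf.continuous.aestronglyMeasurable]
    rw [e1, e2, ← integral_sub hf1 hf2]
    refine integral_mono (hf1.sub hf2) hcint ?_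
    intro z
    have := hf.dist_le_mul z.1 z.2
    simp only [NNReal.coe_one, one_mul, Real.dist_eq, dist_eq_norm] at this
    have h2 := le_abs_self (f z.1 - f z.2)
    dsimp only
    have h3 : ‖f z.1 - f z.2‖ = |f z.1 - f z.2| := rfl
    rw [h3] at this
    linarith
  have e3 : ∫ z, ‖z.1 - z.2‖ ∂γ = (transportCost₁ γ).toReal := by
    rw [transportCost₁, integral_eq_lintegral_of_nonneg_ae
      (Filter.Eventually.of_forall fun z => norm_nonneg _) hcm.aestronglyMeasurable]
    congr 1
    apply lintegral_congr
    intro z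
    rw [ofReal_norm, enorm_eq_nnnorm]
  calc ENNReal.ofReal ((∫ x, f x ∂μ) - ∫ x, f x ∂ν)
      ≤ ENNReal.ofReal ((transportCost₁ γ).toReal) := by
        apply ENNReal.ofReal_le_ofReal; rw [← e3]; exact key
    _ = transportCost₁ γ := ENNReal.ofReal_toReal hfin

end Aux

lemma tail_small {d : ℕ} (μ : Measure (Euc d)) [IsProbabilityMeasure μ]
    (hμ : finiteFirstMoment μ) {ε : ℝ≥0∞} (hε : ε ≠ 0) :
    ∀ᶠ R : ℕ in Filter.atTop,
      ∫⁻ x in {x : Euc d | (R : ℝ) < ‖x‖}, (‖x‖₊ : ℝ≥0∞) ∂μ < ε := by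
  have hms : ∀ R : ℕ, MeasurableSet {x : Euc d | (R : ℝ) < ‖x‖} := fun R =>
    measurableSet_lt measurable_const continuous_norm.measurable
  have hmeas : ∀ R : ℕ, Measurable
      (Set.indicator {x : Euc d | (R : ℝ) < ‖x‖} (fun x => (‖x‖₊ : ℝ≥0∞))) := fun R =>
    (measurable_nnnorm.coe_nnreal_ennreal).indicator (hms R)
  have key : Filter.Tendsto
      (fun R : ℕ => ∫⁻ x, Set.indicator {x : Euc d | (R : ℝ) < ‖x‖}
        (fun x => (‖x‖₊ : ℝ≥0∞)) x ∂μ) Filter.atTop (nhds 0) := by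
    have h0 : (0 : ℝ≥0∞) = ∫⁻ _x : Euc d, 0 ∂μ := by simp
    rw [h0]
    apply tendsto_lintegral_of_dominated_convergence (fun x => (‖x‖₊ : ℝ≥0∞))
      (fun R => hmeas R)
    · intro R
      filter_upwards with x
      by_cases h : x ∈ {x : Euc d | (R : ℝ) < ‖x‖}
      · rw [Set.indicator_of_mem h]
      · rw [Set.indicator_of_notMem h]; exact zero_le
    · exact hμ
    · filter_upwards with x
      have : ∀ᶠ R : ℕ in Filter.atTop, Set.indicator {x : Euc d | (R : ℝ) < ‖x‖}
          (fun x => (‖x‖₊ : ℝ≥0∞)) x = 0 := by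
        obtain ⟨N, hN⟩ := exists_nat_ge ‖x‖
        filter_upwards [Filter.eventually_ge_atTop N] with R hR
        apply Set.indicator_of_notMem
        simp only [Set.mem_setOf_eq, not_lt]
        exact hN.trans (by exact_mod_cast hR)
      exact tendsto_const_nhds.congr' (this.mono fun R h => h.symm)
  have := key.eventually_lt_const (lt_of_le_of_ne zero_le (Ne.symm hε))
  filter_upwards [this] with R hR
  rwa [lintegral_indicator (hms R)] at hR

lemma coord_abs_le_norm {d : ℕ} (x : Euc d) (i : Fin d) : |x i| ≤ ‖x‖ := by
  rw [EuclideanSpace.norm_eq]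
  rw [← Real.sqrt_sq_eq_abs]
  apply Real.sqrt_le_sqrt
  have : |x i| ^ 2 ≤ ∑ j, ‖x j‖ ^ 2 := by
    have := Finset.single_le_sum (f := fun j => ‖x j‖^2) (fun j _ => by positivity)
      (Finset.mem_univ i)
    simpa [Real.norm_eq_abs, sq_abs] using this
  simpa [sq_abs] using this

lemma discretization {d : ℕ} (μ ν : Measure (Euc d)) [IsProbabilityMeasure μ]
    [IsProbabilityMeasure ν] (hμ : finiteFirstMoment μ) (hν : finiteFirstMoment ν)
    {ε : ℝ} (hε : 0 < ε) :
    ∃ (P : Finset (Euc d)) (T : Euc d → Euc d), P.Nonempty ∧ Measurable T ∧ (∀ x, T x ∈ P) ∧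
      (∫⁻ x, (‖x - T x‖₊ : ℝ≥0∞) ∂μ) ≤ ENNReal.ofReal ε ∧
      (∫⁻ x, (‖x - T x‖₊ : ℝ≥0∞) ∂ν) ≤ ENNReal.ofReal ε := by
  classical
  have hε2 : (0:ℝ) < ε / 2 := by linarith
  have hε2' : ENNReal.ofReal (ε / 2) ≠ 0 := by
    simp [ENNReal.ofReal_eq_zero, not_le, hε2]
  obtain ⟨R, hRμ, hRν⟩ := ((tail_small μ hμ hε2').and (tail_small ν hν hε2')).exists
  set e := (MeasurableEquiv.toLp 2 (Fin d → ℝ)).symm with he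
  set δ : ℝ := ε / (2 * (Real.sqrt d + 1)) with hδdef
  have hsd : (0:ℝ) ≤ Real.sqrt d := Real.sqrt_nonneg _
  have hδ : 0 < δ := by
    apply div_pos hε
    positivity
  set M : ℕ := ⌈(R : ℝ) / δ⌉₊ + 1 with hM
  set grid : Euc d → Euc d := fun x => e.symm (fun i => δ * (round (x i / δ) : ℤ)) with hgrid
  set T : Euc d → Euc d := fun x => if ‖x‖ ≤ (R : ℝ) then grid x else 0 with hT
  set P : Finset (Euc d) := insert 0
    ((Fintype.piFinset fun _ : Fin d => Finset.Icc (-(M:ℤ)) M).image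
      (fun k => (e.symm fun i => δ * (k i : ℝ) : Euc d))) with hP
  have hmeasT : Measurable T := by
    apply Measurable.ite
    · exact measurableSet_le continuous_norm.measurable measurable_const
    · apply e.symm.measurable.comp
      apply measurable_pi_lambda
      intro i
      have h1 : Measurable fun x : Euc d => x i :=
        ((EuclideanSpace.proj i : Euc d →L[ℝ] ℝ).continuous).measurable
      have h2 : Measurable fun t : ℝ => (round t : ℤ) := by
        have : (fun t : ℝ => (round t : ℤ)) = fun t : ℝ => ⌊t + 1/2⌋ := by
          funext t; rw [round_eq]
        rw [this]
        exact (measurable_id.add_const _).floor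
      have h3 : Measurable fun k : ℤ => (k : ℝ) := fun s _ => trivial
      exact ((h3.comp h2).comp (h1.div_const δ)).const_mul δ
    · exact measurable_const
  have hrange : ∀ x, T x ∈ P := by
    intro x
    rw [hT]
    by_cases h : ‖x‖ ≤ (R : ℝ)
    · simp only [if_pos h]
      apply Finset.mem_insert_of_mem
      apply Finset.mem_image.2
      refine ⟨fun i => round (x i / δ), ?_, rfl⟩
      rw [Fintype.mem_piFinset]
      intro i
      rw [Finset.mem_Icc]
      have habs : |(round (x i / δ) : ℝ)| ≤ |x i / δ| + 1/2 := by
        have h1 := abs_sub_round (x i / δ)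
        have := abs_sub_abs_le_abs_sub ((round (x i / δ) : ℝ)) (x i / δ)
        rw [abs_sub_comm] at this
        linarith
      have hxi : |x i / δ| ≤ (R : ℝ) / δ := by
        rw [abs_div, abs_of_pos hδ]
        gcongr
        exact (coord_abs_le_norm x i).trans h
      have hRδ : (R : ℝ) / δ ≤ (⌈(R : ℝ) / δ⌉₊ : ℝ) := Nat.le_ceil _
      have : |(round (x i / δ) : ℝ)| ≤ (M : ℝ) := by
        have hM1 : ((⌈(R : ℝ) / δ⌉₊ : ℝ) + 1) = (M : ℝ) := by push_cast [hM]; ring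
        linarith
      rw [abs_le] at this
      constructor
      · exact_mod_cast this.1
      · exact_mod_cast this.2
    · simp only [if_neg h]
      exact Finset.mem_insert_self _ _
  have hgriderr : ∀ x : Euc d, ‖x - grid x‖ ≤ ε / 2 := by
    intro x
    have hcoord : ∀ i, |x i - δ * (round (x i / δ) : ℤ)| ≤ δ := by
      intro i
      have h1 := abs_sub_round (x i / δ)
      have : x i - δ * (round (x i / δ) : ℤ) = δ * (x i / δ - round (x i / δ)) := by
        field_simp
      rw [this, abs_mul, abs_of_pos hδ]
      nlinarith [hδ]
    have : ‖x - grid x‖ ≤ Real.sqrt (d * δ^2) := by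
      rw [EuclideanSpace.norm_eq]
      apply Real.sqrt_le_sqrt
      have : ∀ i, ‖(x - grid x) i‖ ^ 2 ≤ δ^2 := by
        intro i
        have hi : (x - grid x) i = x i - δ * (round (x i / δ) : ℤ) := by
          simp [hgrid, PiLp.sub_apply]
          rfl
        rw [Real.norm_eq_abs, hi]
        exact pow_le_pow_left₀ (abs_nonneg _) (hcoord i) 2
      calc ∑ i, ‖(x - grid x) i‖ ^ 2 ≤ ∑ _i : Fin d, δ^2 := Finset.sum_le_sum fun i _ => this i
        _ = d * δ^2 := by simp [mul_comm]
    refine this.trans ?_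
    rw [show (d : ℝ) * δ^2 = (Real.sqrt d * δ)^2 by
      rw [mul_pow, Real.sq_sqrt (Nat.cast_nonneg d)],
      Real.sqrt_sq (by positivity)]
    rw [hδdef]
    rw [div_eq_mul_inv, ← mul_assoc]
    rw [show Real.sqrt d * ε * (2 * (Real.sqrt d + 1))⁻¹ = ε / 2 * (Real.sqrt d / (Real.sqrt d + 1)) by
      field_simp]
    have : Real.sqrt d / (Real.sqrt d + 1) ≤ 1 := by
      rw [div_le_one (by linarith)]; linarith
    nlinarith [hε2]
  -- the integral bound, proven uniformly
  have main : ∀ (κ : Measure (Euc d)), IsProbabilityMeasure κ →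
      (∫⁻ x in {x : Euc d | (R : ℝ) < ‖x‖}, (‖x‖₊ : ℝ≥0∞) ∂κ < ENNReal.ofReal (ε/2)) →
      ∫⁻ x, (‖x - T x‖₊ : ℝ≥0∞) ∂κ ≤ ENNReal.ofReal ε := by
    intro κ hκ htail
    have hs : MeasurableSet {x : Euc d | ‖x‖ ≤ (R:ℝ)} :=
      measurableSet_le continuous_norm.measurable measurable_const
    rw [← lintegral_add_compl (fun x => (‖x - T x‖₊ : ℝ≥0∞)) hs]
    have h1 : ∫⁻ x in {x : Euc d | ‖x‖ ≤ (R:ℝ)}, (‖x - T x‖₊ : ℝ≥0∞) ∂κ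
        ≤ ENNReal.ofReal (ε/2) := by
      have hb : ∀ x ∈ {x : Euc d | ‖x‖ ≤ (R:ℝ)}, (‖x - T x‖₊ : ℝ≥0∞) ≤ ENNReal.ofReal (ε/2) := by
        intro x hx
        rw [← enorm_eq_nnnorm, ← ofReal_norm]
        apply ENNReal.ofReal_le_ofReal
        simp only [Set.mem_setOf_eq] at hx
        simp only [hT]
        rw [if_pos hx]
        exact hgriderr x
      calc ∫⁻ x in {x : Euc d | ‖x‖ ≤ (R:ℝ)}, (‖x - T x‖₊ : ℝ≥0∞) ∂κ
          ≤ ∫⁻ _x in {x : Euc d | ‖x‖ ≤ (R:ℝ)}, ENNReal.ofReal (ε/2) ∂κ :=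
            setLIntegral_mono (by fun_prop) hb
        _ = ENNReal.ofReal (ε/2) * κ {x : Euc d | ‖x‖ ≤ (R:ℝ)} := by
            rw [setLIntegral_const]
        _ ≤ ENNReal.ofReal (ε/2) * 1 := by
            apply mul_le_mul_right
            exact prob_le_one
        _ = ENNReal.ofReal (ε/2) := mul_one _
    have h2 : ∫⁻ x in {x : Euc d | ‖x‖ ≤ (R:ℝ)}ᶜ, (‖x - T x‖₊ : ℝ≥0∞) ∂κ
        ≤ ENNReal.ofReal (ε/2) := by
      have hset : {x : Euc d | ‖x‖ ≤ (R:ℝ)}ᶜ = {x : Euc d | (R:ℝ) < ‖x‖} := by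
        ext x; simp [not_le]
      rw [hset]
      have : ∀ x ∈ {x : Euc d | (R:ℝ) < ‖x‖}, (‖x - T x‖₊ : ℝ≥0∞) = (‖x‖₊ : ℝ≥0∞) := by
        intro x hx
        have : T x = 0 := by
          simp only [Set.mem_setOf_eq] at hx
          simp only [hT]
          rw [if_neg (not_le.2 hx)]
        rw [this, sub_zero]
      calc ∫⁻ x in {x : Euc d | (R:ℝ) < ‖x‖}, (‖x - T x‖₊ : ℝ≥0∞) ∂κ
          = ∫⁻ x in {x : Euc d | (R:ℝ) < ‖x‖}, (‖x‖₊ : ℝ≥0∞) ∂κ :=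
            setLIntegral_congr_fun
              (measurableSet_lt measurable_const continuous_norm.measurable)
              this
        _ ≤ ENNReal.ofReal (ε/2) := le_of_lt htail
    calc _ ≤ ENNReal.ofReal (ε/2) + ENNReal.ofReal (ε/2) := add_le_add h1 h2
      _ = ENNReal.ofReal ε := by
          rw [← ENNReal.ofReal_add (le_of_lt hε2) (le_of_lt hε2)]
          norm_num
  exact ⟨P, T, ⟨0, Finset.mem_insert_self _ _⟩, hmeasT, hrange,
    main μ ‹_› hRμ, main ν ‹_› hRν⟩

/-- A finite inf' of `K`-Lipschitz functions is `K`-Lipschitz. -/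
lemma lipschitzWith_finset_inf' {α ι : Type*} [PseudoMetricSpace α] {K : NNReal}
    (s : Finset ι) (hs : s.Nonempty) (f : ι → α → ℝ)
    (hf : ∀ i ∈ s, LipschitzWith K (f i)) :
    LipschitzWith K (fun y => s.inf' hs (fun i => f i y)) := by
  apply LipschitzWith.of_dist_le_mul
  intro x y
  rw [Real.dist_eq, abs_sub_le_iff]
  have key : ∀ u v : α, s.inf' hs (fun i => f i u) - s.inf' hs (fun i => f i v)
      ≤ K * dist u v := by
    intro u v
    obtain ⟨j, hj, hjv⟩ := Finset.exists_mem_eq_inf' hs (fun i => f i v)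
    have h1 : s.inf' hs (fun i => f i u) ≤ f j u := Finset.inf'_le _ hj
    have h2 : f j u - f j v ≤ K * dist u v := by
      have := (hf j hj).dist_le_mul u v
      rw [Real.dist_eq] at this
      have := le_trans (le_abs_self _) this
      linarith
    rw [hjv]
    linarith
  exact ⟨key x y, by rw [dist_comm x y] at *; exact key y x⟩

lemma lipschitz_norm_sub_const {d : ℕ} (p : Euc d) (c : ℝ) :
    LipschitzWith 1 (fun y : Euc d => ‖y - p‖ - c) := by
  apply LipschitzWith.of_dist_le_mul
  intro x y
  rw [NNReal.coe_one, one_mul, Real.dist_eq]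
  have : ‖x - p‖ - c - (‖y - p‖ - c) = ‖x - p‖ - ‖y - p‖ := by ring
  rw [this]
  calc |‖x - p‖ - ‖y - p‖| ≤ ‖(x - p) - (y - p)‖ := abs_norm_sub_norm_le _ _
    _ = dist x y := by rw [dist_eq_norm]; congr 1; abel

set_option maxHeartbeats 1000000 in
lemma finite_duality {d : ℕ} {ι : Type} [Fintype ι] [Nonempty ι] (pt : ι → Euc d)
    (a b : ι → ℝ) (ha : ∀ p, 0 ≤ a p) (hb : ∀ q, 0 ≤ b q)
    (hsa : ∑ p, a p = 1) (hsb : ∑ q, b q = 1) {ε : ℝ} (hε : 0 < ε) :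
    ∃ (c : ι → ι → ℝ) (f : Euc d → ℝ),
      (∀ p q, 0 ≤ c p q) ∧ (∀ p, ∑ q, c p q = a p) ∧ (∀ q, ∑ p, c p q = b q) ∧
      LipschitzWith 1 f ∧
      ∑ p, ∑ q, c p q * ‖pt p - pt q‖ ≤ (∑ p, a p * f (pt p)) - (∑ q, b q * f (pt q)) + ε := by
  classical
  set cost : ((ι × ι) → ℝ) → ℝ := fun w => ∑ x : ι × ι, w x * ‖pt x.1 - pt x.2‖ with hcost
  -- the linear map to (marginal₁, marginal₂, cost)
  set L : ((ι × ι) → ℝ) →ₗ[ℝ] ((ι → ℝ) × (ι → ℝ) × ℝ) :=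
    { toFun := fun w => (fun p => ∑ q, w (p, q), fun q => ∑ p, w (p, q), cost w)
      map_add' := by
        intro w₁ w₂
        refine Prod.ext ?_ (Prod.ext ?_ ?_)
        · funext p; simp [Finset.sum_add_distrib]
        · funext q; simp [Finset.sum_add_distrib]
        · simp [hcost, Finset.sum_add_distrib, add_mul]
      map_smul' := by
        intro r w
        refine Prod.ext ?_ (Prod.ext ?_ ?_)
        · funext p; simp [Finset.mul_sum]
        · funext q; simp [Finset.mul_sum]
        · simp [hcost, Finset.mul_sum, mul_assoc] } with hL
  have hLcont : Continuous L := L.continuous_of_finiteDimensional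
  -- the feasible set
  set K : Set ((ι × ι) → ℝ) := {w | (∀ x, 0 ≤ w x) ∧ (∀ p, ∑ q, w (p, q) = a p) ∧
    (∀ q, ∑ p, w (p, q) = b q)} with hK
  have hKsub : K ⊆ stdSimplex ℝ (ι × ι) := by
    rintro w ⟨h1, h2, h3⟩
    refine ⟨fun x => h1 x, ?_⟩
    rw [Fintype.sum_prod_type]
    simp only [h2]
    exact hsa
  have hKne : K.Nonempty := by
    refine ⟨fun x => a x.1 * b x.2, fun x => mul_nonneg (ha _) (hb _), ?_, ?_⟩
    · intro p
      show ∑ q : ι, a p * b q = a p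
      rw [← Finset.mul_sum, hsb, mul_one]
    · intro q
      show ∑ p : ι, a p * b q = b q
      rw [← Finset.sum_mul, hsa, one_mul]
  have hKclosed : IsClosed K := by
    have h1 : IsClosed {w : (ι × ι) → ℝ | ∀ x, 0 ≤ w x} := by
      have : {w : (ι × ι) → ℝ | ∀ x, 0 ≤ w x} = ⋂ x, {w | 0 ≤ w x} := by
        ext w; simp
      rw [this]
      exact isClosed_iInter fun x => isClosed_le continuous_const (continuous_apply x)
    have h2 : IsClosed {w : (ι × ι) → ℝ | ∀ p, ∑ q, w (p, q) = a p} := by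
      have : {w : (ι × ι) → ℝ | ∀ p, ∑ q, w (p, q) = a p} = ⋂ p, {w | ∑ q, w (p, q) = a p} := by
        ext w; simp
      rw [this]
      exact isClosed_iInter fun p => isClosed_eq
        (continuous_finset_sum _ fun q _ => continuous_apply _) continuous_const
    have h3 : IsClosed {w : (ι × ι) → ℝ | ∀ q, ∑ p, w (p, q) = b q} := by
      have : {w : (ι × ι) → ℝ | ∀ q, ∑ p, w (p, q) = b q} = ⋂ q, {w | ∑ p, w (p, q) = b q} := by
        ext w; simp
      rw [this]
      exact isClosed_iInter fun q => isClosed_eq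
        (continuous_finset_sum _ fun p _ => continuous_apply _) continuous_const
    have : K = {w : (ι × ι) → ℝ | ∀ x, 0 ≤ w x} ∩
        ({w | ∀ p, ∑ q, w (p, q) = a p} ∩ {w | ∀ q, ∑ p, w (p, q) = b q}) := by
      ext w; simp [hK, and_assoc]
    rw [this]
    exact h1.inter (h2.inter h3)
  have hKcompact : IsCompact K :=
    (isCompact_stdSimplex ℝ _).of_isClosed_subset hKclosed hKsub
  have hcostcont : Continuous cost :=
    continuous_finset_sum _ fun x _ => (continuous_apply x).mul continuous_const
  obtain ⟨w₀, hw₀K, hw₀min⟩ := hKcompact.exists_isMinOn hKne hcostcont.continuousOn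
  set W : ℝ := cost w₀ with hWdef
  -- the compact convex body
  set B : Set ((ι → ℝ) × (ι → ℝ) × ℝ) := L '' (stdSimplex ℝ (ι × ι)) with hB
  have hBconv : Convex ℝ B := (convex_stdSimplex ℝ _).linear_image L
  have hBclosed : IsClosed B := ((isCompact_stdSimplex ℝ _).image hLcont).isClosed
  set z : ((ι → ℝ) × (ι → ℝ) × ℝ) := (a, b, W - ε) with hz
  have hzB : z ∉ B := by
    rintro ⟨w, hwΔ, hLw⟩
    have h1 : (fun p => ∑ q, w (p, q)) = a := congrArg Prod.fst hLw
    have h23 := congrArg Prod.snd hLw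
    have h2 : (fun q => ∑ p, w (p, q)) = b := congrArg Prod.fst h23
    have h3 : cost w = W - ε := congrArg Prod.snd h23
    have hwK : w ∈ K := ⟨hwΔ.1, fun p => congrFun h1 p, fun q => congrFun h2 q⟩
    have := hw₀min hwK
    rw [hWdef] at h3
    simp only [Set.mem_setOf_eq] at this
    rw [h3] at this
    linarith
  obtain ⟨F, u, hzu, hBu⟩ := geometric_hahn_banach_point_closed hBconv hBclosed hzB
  set φ : ι → ℝ := fun p => F ((Pi.single p 1 : ι → ℝ), 0, 0) with hφ
  set ψ : ι → ℝ := fun q => F (0, (Pi.single q 1 : ι → ℝ), 0) with hψ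
  set s₀ : ℝ := F (0, 0, 1) with hs₀def
  -- decomposition of F
  have decomp : ∀ (m₁ m₂ : ι → ℝ) (t : ℝ),
      F (m₁, m₂, t) = (∑ p, m₁ p * φ p) + (∑ q, m₂ q * ψ q) + t * s₀ := by
    intro m₁ m₂ t
    have hsplit : (m₁, m₂, t) = ((m₁, 0, 0) : (ι → ℝ) × (ι → ℝ) × ℝ) + (0, m₂, 0) + (0, 0, t) := by
      refine Prod.ext ?_ (Prod.ext ?_ ?_) <;> simp
    have e1 : F (m₁, 0, 0) = ∑ p, m₁ p * φ p := by
      have : ((m₁, 0, 0) : (ι → ℝ) × (ι → ℝ) × ℝ)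
          = ∑ p, m₁ p • (((Pi.single p 1 : ι → ℝ), 0, 0) : (ι → ℝ) × (ι → ℝ) × ℝ) := by
        refine Prod.ext ?_ (Prod.ext ?_ ?_)
        · simp only [Prod.fst_sum, Prod.smul_mk]
          rw [← Finset.univ_sum_single m₁]
          congr 1
          funext p
          ext x
          by_cases hx : x = p <;> simp [Pi.single_apply, hx]
        · simp [Prod.fst_sum, Prod.snd_sum, Prod.smul_fst, Prod.smul_snd, smul_zero]
        · simp [Prod.fst_sum, Prod.snd_sum, Prod.smul_fst, Prod.smul_snd, smul_zero]
      rw [this, map_sum]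
      simp only [_root_.map_smul, smul_eq_mul]
      rfl
    have e2 : F (0, m₂, 0) = ∑ q, m₂ q * ψ q := by
      have : ((0, m₂, 0) : (ι → ℝ) × (ι → ℝ) × ℝ)
          = ∑ q, m₂ q • ((0, (Pi.single q 1 : ι → ℝ), 0) : (ι → ℝ) × (ι → ℝ) × ℝ) := by
        refine Prod.ext ?_ (Prod.ext ?_ ?_)
        · simp [Prod.fst_sum, Prod.smul_fst, smul_zero]
        · simp only [Prod.snd_sum, Prod.fst_sum, Prod.smul_fst, Prod.smul_snd]
          rw [← Finset.univ_sum_single m₂]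
          congr 1
          funext q
          ext x
          by_cases hx : x = q <;> simp [Pi.single_apply, hx]
        · simp [Prod.snd_sum, Prod.smul_fst, Prod.smul_snd, smul_zero]
      rw [this, map_sum]
      simp only [_root_.map_smul, smul_eq_mul]
      rfl
    have e3 : F (0, 0, t) = t * s₀ := by
      have : ((0, 0, t) : (ι → ℝ) × (ι → ℝ) × ℝ)
          = t • ((0, 0, 1) : (ι → ℝ) × (ι → ℝ) × ℝ) := by
        refine Prod.ext ?_ (Prod.ext ?_ ?_) <;> simp
      rw [this, _root_.map_smul, smul_eq_mul, hs₀def]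
    rw [hsplit, map_add, map_add, e1, e2, e3]
  -- the vertices are in B
  have hvert : ∀ x : ι × ι, u < φ x.1 + ψ x.2 + ‖pt x.1 - pt x.2‖ * s₀ := by
    intro x
    have hmem : (Pi.single x (1:ℝ) : (ι × ι) → ℝ) ∈ stdSimplex ℝ (ι × ι) := by
      constructor
      · intro y
        by_cases hy : y = x <;> simp [Pi.single_apply, hy]
      · simp [Pi.single_apply]
    have hLx : L (Pi.single x (1:ℝ)) = ((Pi.single x.1 1 : ι → ℝ), (Pi.single x.2 1 : ι → ℝ),
        ‖pt x.1 - pt x.2‖) := by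
      refine Prod.ext ?_ (Prod.ext ?_ ?_)
      · funext p
        simp only [hL, LinearMap.coe_mk, AddHom.coe_mk]
        simp only [Pi.single_apply, Prod.ext_iff]
        by_cases hp : p = x.1
        · simp [hp, Finset.sum_ite_eq' Finset.univ x.2 (fun _ => (1:ℝ))]
        · simp [hp]
      · funext q
        simp only [hL, LinearMap.coe_mk, AddHom.coe_mk]
        simp only [Pi.single_apply, Prod.ext_iff]
        by_cases hq : q = x.2
        · simp [hq, Finset.sum_ite_eq Finset.univ x.1 (fun _ => (1:ℝ))]
        · simp [hq]
      · simp only [hL, LinearMap.coe_mk, AddHom.coe_mk, hcost]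
        rw [Finset.sum_eq_single x]
        · simp
        · intro y _ hy; simp [Pi.single_apply, hy]
        · simp
    have := hBu _ ⟨Pi.single x (1:ℝ), hmem, hLx⟩
    rw [decomp] at this
    have hsum1 : ∑ p, (Pi.single x.1 1 : ι → ℝ) p * φ p = φ x.1 := by
      rw [Finset.sum_eq_single x.1]
      · simp
      · intro p _ hp; simp [Pi.single_apply, hp]
      · simp
    have hsum2 : ∑ q, (Pi.single x.2 1 : ι → ℝ) q * ψ q = ψ x.2 := by
      rw [Finset.sum_eq_single x.2]
      · simp
      · intro q _ hq; simp [Pi.single_apply, hq]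
      · simp
    rwa [hsum1, hsum2] at this
  -- minimum coupling gives a point of B
  have hw₀Δ : w₀ ∈ stdSimplex ℝ (ι × ι) := hKsub hw₀K
  have hmin_pt : u < (∑ p, a p * φ p) + (∑ q, b q * ψ q) + W * s₀ := by
    have hLw₀ : L w₀ = (a, b, W) := by
      refine Prod.ext ?_ (Prod.ext ?_ ?_)
      · funext p
        simp only [hL, LinearMap.coe_mk, AddHom.coe_mk]
        exact hw₀K.2.1 p
      · funext q
        simp only [hL, LinearMap.coe_mk, AddHom.coe_mk]
        exact hw₀K.2.2 q
      · rfl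
    have := hBu _ ⟨w₀, hw₀Δ, hLw₀⟩
    rwa [decomp] at this
  have hz_lt : (∑ p, a p * φ p) + (∑ q, b q * ψ q) + (W - ε) * s₀ < u := by
    rw [← decomp]; exact hzu
  have hs₀pos : 0 < s₀ := by
    by_contra hc
    push_neg at hc
    nlinarith [mul_nonpos_of_nonneg_of_nonpos hε.le hc]
  -- potentials
  set β : ι → ℝ := fun q => -ψ q / s₀ with hβ
  set α : ι → ℝ := fun p => (u - φ p) / s₀ with hα
  have hkey : ∀ p q : ι, α p + β q ≤ ‖pt p - pt q‖ := by
    intro p q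
    have := hvert (p, q)
    rw [hα, hβ]
    rw [← add_div, div_le_iff₀ hs₀pos]
    nlinarith
  set f : Euc d → ℝ := fun y => Finset.univ.inf' Finset.univ_nonempty
    (fun j : ι => ‖y - pt j‖ - β j) with hf
  have hflip : LipschitzWith 1 f :=
    lipschitzWith_finset_inf' _ _ _ fun j _ => lipschitz_norm_sub_const (pt j) (β j)
  have hfub : ∀ q : ι, f (pt q) ≤ -β q := by
    intro q
    rw [hf]
    have := Finset.inf'_le (fun j : ι => ‖pt q - pt j‖ - β j) (Finset.mem_univ q)
    simp only [sub_self, norm_zero, zero_sub] at this; exact this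
  have hflb : ∀ p : ι, α p ≤ f (pt p) := by
    intro p
    rw [hf]
    apply Finset.le_inf'
    intro j _
    have := hkey p j
    linarith
  refine ⟨fun p q => w₀ (p, q), f, fun p q => hw₀K.1 (p, q), hw₀K.2.1, hw₀K.2.2, hflip, ?_⟩
  have hcost_eq : ∑ p, ∑ q, w₀ (p, q) * ‖pt p - pt q‖ = W := by
    simp [hWdef, hcost, Fintype.sum_prod_type]
  rw [hcost_eq]
  have hWbound : W - ε < (∑ p, a p * α p) + (∑ q, b q * β q) := by
    have e1 : ∑ p, a p * α p = (u - ∑ p, a p * φ p) / s₀ := by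
      rw [hα]
      calc ∑ p, a p * ((u - φ p) / s₀)
          = (∑ p, (a p * u - a p * φ p)) / s₀ := by
            rw [Finset.sum_div]
            exact Finset.sum_congr rfl fun p _ => by field_simp
        _ = (u - ∑ p, a p * φ p) / s₀ := by
            rw [Finset.sum_sub_distrib, ← Finset.sum_mul, hsa, one_mul]
    have e2 : ∑ q, b q * β q = (-∑ q, b q * ψ q) / s₀ := by
      rw [hβ]
      calc ∑ q, b q * (-ψ q / s₀)
          = (∑ q, -(b q * ψ q)) / s₀ := by
            rw [Finset.sum_div]
            exact Finset.sum_congr rfl fun q _ => by field_simp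
        _ = (-∑ q, b q * ψ q) / s₀ := by rw [Finset.sum_neg_distrib]
    rw [e1, e2, ← add_div, lt_div_iff₀ hs₀pos]
    nlinarith [hz_lt]
  have h1 : ∑ p, a p * α p ≤ ∑ p, a p * f (pt p) :=
    Finset.sum_le_sum fun p _ => mul_le_mul_of_nonneg_left (hflb p) (ha p)
  have h2 : ∑ q, b q * f (pt q) ≤ ∑ q, b q * (-β q) :=
    Finset.sum_le_sum fun q _ => mul_le_mul_of_nonneg_left (hfub q) (hb q)
  have h3 : ∑ q, b q * (-β q) = -∑ q, b q * β q := by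
    rw [← Finset.sum_neg_distrib]
    exact Finset.sum_congr rfl fun q _ => by ring
  linarith [h1, h2, hWbound]

set_option maxHeartbeats 1000000 in
lemma glue_coupling {d : ℕ} (μ ν : Measure (Euc d)) [IsProbabilityMeasure μ]
    [IsProbabilityMeasure ν] (P : Finset (Euc d)) [Nonempty ↥P]
    (T : Euc d → Euc d) (hT : Measurable T) (hrange : ∀ x, T x ∈ P)
    (c : ↥P → ↥P → ℝ) (hc0 : ∀ p q, 0 ≤ c p q)
    (hc1 : ∀ p, ∑ q, c p q = (μ (T ⁻¹' {(p : Euc d)})).toReal)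
    (hc2 : ∀ q, ∑ p, c p q = (ν (T ⁻¹' {(q : Euc d)})).toReal) :
    ∃ γ : Measure (Euc d × Euc d), IsCoupling γ μ ν ∧
      transportCost₁ γ ≤ ENNReal.ofReal (∑ p, ∑ q, c p q * ‖(p : Euc d) - q‖)
        + (∫⁻ x, (‖x - T x‖₊ : ℝ≥0∞) ∂μ) + ∫⁻ x, (‖x - T x‖₊ : ℝ≥0∞) ∂ν := by
  classical
  set A : ↥P → Set (Euc d) := fun p => T ⁻¹' {(p : Euc d)} with hA
  have hAmeas : ∀ p, MeasurableSet (A p) := fun p => hT (measurableSet_singleton _)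
  have hAdisj : Set.PairwiseDisjoint (Finset.univ : Finset ↥P) A := by
    intro p _ q _ hpq
    apply Set.disjoint_left.2
    intro x hxp hxq
    apply hpq
    apply Subtype.ext
    rw [← hxp, ← hxq]
  have hAcover : ⋃ p ∈ (Finset.univ : Finset ↥P), A p = Set.univ := by
    apply Set.eq_univ_of_forall
    intro x
    refine Set.mem_biUnion (Finset.mem_univ (⟨T x, hrange x⟩ : ↥P)) ?_
    simp [hA]
  set mp : ↥P → ℝ≥0∞ := fun p => μ (A p) with hmp
  set nq : ↥P → ℝ≥0∞ := fun q => ν (A q) with hnq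
  set μp : ↥P → Measure (Euc d) := fun p => (mp p)⁻¹ • μ.restrict (A p) with hμp
  set νq : ↥P → Measure (Euc d) := fun q => (nq q)⁻¹ • ν.restrict (A q) with hνq
  set γ : Measure (Euc d × Euc d) :=
    ∑ p : ↥P, ∑ q : ↥P, (ENNReal.ofReal (c p q)) • ((μp p).prod (νq q)) with hγ
  have hmp_ne_top : ∀ p, mp p ≠ ∞ := fun p => measure_ne_top _ _
  have hnq_ne_top : ∀ q, nq q ≠ ∞ := fun q => measure_ne_top _ _
  have hrow : ∀ p, ∑ q, ENNReal.ofReal (c p q) = mp p := by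
    intro p
    rw [← ENNReal.ofReal_sum_of_nonneg (fun q _ => hc0 p q), hc1 p]
    exact ENNReal.ofReal_toReal (hmp_ne_top p)
  have hcol : ∀ q, ∑ p, ENNReal.ofReal (c p q) = nq q := by
    intro q
    rw [← ENNReal.ofReal_sum_of_nonneg (fun p _ => hc0 p q), hc2 q]
    exact ENNReal.ofReal_toReal (hnq_ne_top q)
  have hczero_row : ∀ p q, mp p = 0 → ENNReal.ofReal (c p q) = 0 := by
    intro p q h
    have h1 : c p q ≤ ∑ q', c p q' :=
      Finset.single_le_sum (fun q' _ => hc0 p q') (Finset.mem_univ q)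
    rw [hc1 p] at h1
    have h2 : μ (T ⁻¹' {(p : Euc d)}) = 0 := h
    rw [h2, ENNReal.toReal_zero] at h1
    rw [ENNReal.ofReal_eq_zero]
    exact h1
  have hczero_col : ∀ p q, nq q = 0 → ENNReal.ofReal (c p q) = 0 := by
    intro p q h
    have h1 : c p q ≤ ∑ p', c p' q :=
      Finset.single_le_sum (fun p' _ => hc0 p' q) (Finset.mem_univ p)
    rw [hc2 q] at h1
    have h2 : ν (T ⁻¹' {(q : Euc d)}) = 0 := h
    rw [h2, ENNReal.toReal_zero] at h1
    rw [ENNReal.ofReal_eq_zero]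
    exact h1
  -- marginal computation
  have hγapp : ∀ (s : Set (Euc d × Euc d)), MeasurableSet s →
      γ s = ∑ p : ↥P, ∑ q : ↥P, ENNReal.ofReal (c p q) * ((μp p).prod (νq q)) s := by
    intro s hs
    rw [hγ, Measure.finset_sum_apply]
    refine Finset.sum_congr rfl fun p _ => ?_
    rw [Measure.finset_sum_apply]
    exact Finset.sum_congr rfl fun q _ => rfl
  have hfst : γ.map Prod.fst = μ := by
    ext s hs
    rw [Measure.map_apply measurable_fst hs]
    have hpre : Prod.fst ⁻¹' s = s ×ˢ (Set.univ : Set (Euc d)) := by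
      ext z; simp
    rw [hγapp _ (measurable_fst hs), ]
    have hterm : ∀ p q : ↥P, ENNReal.ofReal (c p q) * ((μp p).prod (νq q)) (Prod.fst ⁻¹' s)
        = ENNReal.ofReal (c p q) * ((mp p)⁻¹ * μ (s ∩ A p)) := by
      intro p q
      rw [hpre, Measure.prod_prod]
      by_cases hq : nq q = 0
      · rw [hczero_col p q hq]; simp
      · have hν1 : (νq q) Set.univ = 1 := by
          rw [hνq]
          simp only [Measure.smul_apply, smul_eq_mul, Measure.restrict_apply_univ]
          exact ENNReal.inv_mul_cancel hq (hnq_ne_top q)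
        rw [hν1, mul_one]
        congr 1
        rw [hμp]
        simp only [Measure.smul_apply, smul_eq_mul]
        rw [Measure.restrict_apply hs]
    have hsum : ∀ p : ↥P, ∑ q : ↥P, ENNReal.ofReal (c p q) * ((mp p)⁻¹ * μ (s ∩ A p))
        = μ (s ∩ A p) := by
      intro p
      rw [← Finset.sum_mul, hrow p]
      by_cases hp : mp p = 0
      · have : μ (s ∩ A p) = 0 :=
          measure_mono_null Set.inter_subset_right hp
        rw [this, hp]; simp
      · rw [← mul_assoc, ENNReal.mul_inv_cancel hp (hmp_ne_top p), one_mul]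
    calc ∑ p : ↥P, ∑ q : ↥P, ENNReal.ofReal (c p q) * ((μp p).prod (νq q)) (Prod.fst ⁻¹' s)
        = ∑ p : ↥P, μ (s ∩ A p) := by
          refine Finset.sum_congr rfl fun p _ => ?_
          rw [Finset.sum_congr rfl fun q _ => hterm p q, hsum p]
      _ = μ (⋃ p ∈ (Finset.univ : Finset ↥P), s ∩ A p) := by
          rw [measure_biUnion_finset]
          · exact fun p _ q _ hpq =>
              (hAdisj (Finset.mem_univ p) (Finset.mem_univ q) hpq).mono
                Set.inter_subset_right Set.inter_subset_right
          · exact fun p _ => hs.inter (hAmeas p)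
      _ = μ s := by
          rw [← Set.inter_iUnion₂, hAcover, Set.inter_univ]
  have hsnd : γ.map Prod.snd = ν := by
    ext s hs
    rw [Measure.map_apply measurable_snd hs]
    have hpre : Prod.snd ⁻¹' s = (Set.univ : Set (Euc d)) ×ˢ s := by
      ext z; simp
    rw [hγapp _ (measurable_snd hs)]
    have hterm : ∀ p q : ↥P, ENNReal.ofReal (c p q) * ((μp p).prod (νq q)) (Prod.snd ⁻¹' s)
        = ENNReal.ofReal (c p q) * ((nq q)⁻¹ * ν (s ∩ A q)) := by
      intro p q
      rw [hpre, Measure.prod_prod]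
      by_cases hp : mp p = 0
      · rw [hczero_row p q hp]; simp
      · have hμ1 : (μp p) Set.univ = 1 := by
          rw [hμp]
          simp only [Measure.smul_apply, smul_eq_mul, Measure.restrict_apply_univ]
          exact ENNReal.inv_mul_cancel hp (hmp_ne_top p)
        rw [hμ1, one_mul]
        congr 1
        rw [hνq]
        simp only [Measure.smul_apply, smul_eq_mul]
        rw [Measure.restrict_apply hs]
    have hsum : ∀ q : ↥P, ∑ p : ↥P, ENNReal.ofReal (c p q) * ((nq q)⁻¹ * ν (s ∩ A q))
        = ν (s ∩ A q) := by
      intro q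
      rw [← Finset.sum_mul, hcol q]
      by_cases hq : nq q = 0
      · have : ν (s ∩ A q) = 0 :=
          measure_mono_null Set.inter_subset_right hq
        rw [this, hq]; simp
      · rw [← mul_assoc, ENNReal.mul_inv_cancel hq (hnq_ne_top q), one_mul]
    calc ∑ p : ↥P, ∑ q : ↥P, ENNReal.ofReal (c p q) * ((μp p).prod (νq q)) (Prod.snd ⁻¹' s)
        = ∑ q : ↥P, ν (s ∩ A q) := by
          rw [Finset.sum_comm]
          refine Finset.sum_congr rfl fun q _ => ?_
          rw [Finset.sum_congr rfl fun p _ => hterm p q, hsum q]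
      _ = ν (⋃ q ∈ (Finset.univ : Finset ↥P), s ∩ A q) := by
          rw [measure_biUnion_finset]
          · exact fun p _ q _ hpq =>
              (hAdisj (Finset.mem_univ p) (Finset.mem_univ q) hpq).mono
                Set.inter_subset_right Set.inter_subset_right
          · exact fun q _ => hs.inter (hAmeas q)
      _ = ν s := by
          rw [← Set.inter_iUnion₂, hAcover, Set.inter_univ]
  refine ⟨γ, ⟨hfst, hsnd⟩, ?_⟩
  -- cost bound
  have hcost_expand : transportCost₁ γ
      = ∑ p : ↥P, ∑ q : ↥P, ENNReal.ofReal (c p q)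
          * ∫⁻ z, (‖z.1 - z.2‖₊ : ℝ≥0∞) ∂((μp p).prod (νq q)) := by
    rw [transportCost₁, hγ, lintegral_finset_sum_measure]
    refine Finset.sum_congr rfl fun p _ => ?_
    rw [lintegral_finset_sum_measure]
    exact Finset.sum_congr rfl fun q _ => lintegral_smul_measure _ _
  set Jp : ↥P → ℝ≥0∞ := fun p => ∫⁻ x in A p, (‖x - (p : Euc d)‖₊ : ℝ≥0∞) ∂μ with hJp
  set Kq : ↥P → ℝ≥0∞ := fun q => ∫⁻ y in A q, (‖(q : Euc d) - y‖₊ : ℝ≥0∞) ∂ν with hKq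
  have hmeas1 : Measurable fun z : Euc d × Euc d => (‖z.1 - z.2‖₊ : ℝ≥0∞) :=
    (measurable_fst.sub measurable_snd).nnnorm.coe_nnreal_ennreal
  have hμp_univ : ∀ p, (μp p) Set.univ ≤ 1 := by
    intro p
    simp only [hμp, Measure.smul_apply, smul_eq_mul, Measure.restrict_apply_univ]
    rw [mul_comm]
    exact ENNReal.mul_inv_le_one _
  have hνq_univ : ∀ q, (νq q) Set.univ ≤ 1 := by
    intro q
    simp only [hνq, Measure.smul_apply, smul_eq_mul, Measure.restrict_apply_univ]
    rw [mul_comm]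
    exact ENNReal.mul_inv_le_one _
  have hIbound : ∀ p q : ↥P, (∫⁻ z, (‖z.1 - z.2‖₊ : ℝ≥0∞) ∂((μp p).prod (νq q)))
      ≤ (mp p)⁻¹ * Jp p + (‖(p : Euc d) - (q : Euc d)‖₊ : ℝ≥0∞) + (nq q)⁻¹ * Kq q := by
    intro p q
    set π : Measure (Euc d × Euc d) := (μp p).prod (νq q) with hπ
    have hg1 : Measurable fun x : Euc d => (‖x - (p : Euc d)‖₊ : ℝ≥0∞) :=
      (measurable_id.sub measurable_const).nnnorm.coe_nnreal_ennreal
    have hg2 : Measurable fun y : Euc d => (‖(q : Euc d) - y‖₊ : ℝ≥0∞) :=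
      (measurable_const.sub measurable_id).nnnorm.coe_nnreal_ennreal
    have hptwise : ∀ z : Euc d × Euc d, (‖z.1 - z.2‖₊ : ℝ≥0∞)
        ≤ (‖z.1 - (p : Euc d)‖₊ : ℝ≥0∞) + (‖(p : Euc d) - (q : Euc d)‖₊ : ℝ≥0∞)
          + (‖(q : Euc d) - z.2‖₊ : ℝ≥0∞) := by
      intro z
      have h1 : z.1 - z.2 = (z.1 - (p : Euc d)) + ((p : Euc d) - (q : Euc d))
          + ((q : Euc d) - z.2) := by abel
      have h2 : ‖z.1 - z.2‖₊ ≤ ‖z.1 - (p : Euc d)‖₊ + ‖(p : Euc d) - (q : Euc d)‖₊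
          + ‖(q : Euc d) - z.2‖₊ := by
        rw [h1]
        exact (nnnorm_add_le _ _).trans (add_le_add_left (nnnorm_add_le _ _) _)
      exact_mod_cast h2
    have hπuniv : π Set.univ ≤ 1 := by
      rw [hπ, ← Set.univ_prod_univ, Measure.prod_prod]
      calc (μp p) Set.univ * (νq q) Set.univ ≤ 1 * 1 :=
            mul_le_mul' (hμp_univ p) (hνq_univ q)
        _ = 1 := one_mul 1
    have e1 : (∫⁻ z, (‖z.1 - (p : Euc d)‖₊ : ℝ≥0∞) ∂π) ≤ (mp p)⁻¹ * Jp p := by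
      have : (∫⁻ z, (‖z.1 - (p : Euc d)‖₊ : ℝ≥0∞) ∂π)
          = ∫⁻ x, (‖x - (p : Euc d)‖₊ : ℝ≥0∞) ∂(π.map Prod.fst) := by
        rw [lintegral_map hg1 measurable_fst]
      rw [this, hπ, Measure.map_fst_prod, lintegral_smul_measure, smul_eq_mul]
      have : (∫⁻ x, (‖x - (p : Euc d)‖₊ : ℝ≥0∞) ∂(μp p)) = (mp p)⁻¹ * Jp p := by
        rw [hμp, lintegral_smul_measure, smul_eq_mul, hJp]
      rw [this]
      calc (νq q) Set.univ * ((mp p)⁻¹ * Jp p) ≤ 1 * ((mp p)⁻¹ * Jp p) :=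
            mul_le_mul_left (hνq_univ q) _
        _ = (mp p)⁻¹ * Jp p := one_mul _
    have e3 : (∫⁻ z, (‖(q : Euc d) - z.2‖₊ : ℝ≥0∞) ∂π) ≤ (nq q)⁻¹ * Kq q := by
      have : (∫⁻ z, (‖(q : Euc d) - z.2‖₊ : ℝ≥0∞) ∂π)
          = ∫⁻ y, (‖(q : Euc d) - y‖₊ : ℝ≥0∞) ∂(π.map Prod.snd) := by
        rw [lintegral_map hg2 measurable_snd]
      rw [this, hπ, Measure.map_snd_prod, lintegral_smul_measure, smul_eq_mul]
      have : (∫⁻ y, (‖(q : Euc d) - y‖₊ : ℝ≥0∞) ∂(νq q)) = (nq q)⁻¹ * Kq q := by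
        rw [hνq, lintegral_smul_measure, smul_eq_mul, hKq]
      rw [this]
      calc (μp p) Set.univ * ((nq q)⁻¹ * Kq q) ≤ 1 * ((nq q)⁻¹ * Kq q) :=
            mul_le_mul_left (hμp_univ p) _
        _ = (nq q)⁻¹ * Kq q := one_mul _
    have e2 : (∫⁻ _z : Euc d × Euc d, (‖(p : Euc d) - (q : Euc d)‖₊ : ℝ≥0∞) ∂π)
        ≤ (‖(p : Euc d) - (q : Euc d)‖₊ : ℝ≥0∞) := by
      rw [lintegral_const]
      calc (‖(p : Euc d) - (q : Euc d)‖₊ : ℝ≥0∞) * π Set.univ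
          ≤ (‖(p : Euc d) - (q : Euc d)‖₊ : ℝ≥0∞) * 1 := mul_le_mul_right hπuniv _
        _ = _ := mul_one _
    calc (∫⁻ z, (‖z.1 - z.2‖₊ : ℝ≥0∞) ∂π)
        ≤ ∫⁻ z, ((‖z.1 - (p : Euc d)‖₊ : ℝ≥0∞) + (‖(p : Euc d) - (q : Euc d)‖₊ : ℝ≥0∞)
            + (‖(q : Euc d) - z.2‖₊ : ℝ≥0∞)) ∂π := lintegral_mono hptwise
      _ = (∫⁻ z, (‖z.1 - (p : Euc d)‖₊ : ℝ≥0∞) ∂π)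
            + (∫⁻ _z, (‖(p : Euc d) - (q : Euc d)‖₊ : ℝ≥0∞) ∂π)
            + ∫⁻ z, (‖(q : Euc d) - z.2‖₊ : ℝ≥0∞) ∂π := by
          rw [lintegral_add_right (g := fun z : Euc d × Euc d => (‖(q : Euc d) - z.2‖₊ : ℝ≥0∞)) _
              ((measurable_const.sub measurable_snd).nnnorm.coe_nnreal_ennreal :
                Measurable fun z : Euc d × Euc d => (‖(q : Euc d) - z.2‖₊ : ℝ≥0∞)),
            lintegral_add_right _ measurable_const]
      _ ≤ _ := add_le_add (add_le_add e1 e2) e3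
  -- summing up
  have hS1 : ∑ p : ↥P, ∑ q : ↥P, ENNReal.ofReal (c p q) * ((mp p)⁻¹ * Jp p)
      ≤ ∫⁻ x, (‖x - T x‖₊ : ℝ≥0∞) ∂μ := by
    have hstep : ∀ p : ↥P, ∑ q : ↥P, ENNReal.ofReal (c p q) * ((mp p)⁻¹ * Jp p) ≤ Jp p := by
      intro p
      rw [← Finset.sum_mul, hrow p, ← mul_assoc]
      calc mp p * (mp p)⁻¹ * Jp p ≤ 1 * Jp p :=
            mul_le_mul_left (ENNReal.mul_inv_le_one _) _
        _ = Jp p := one_mul _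
    calc ∑ p : ↥P, ∑ q : ↥P, ENNReal.ofReal (c p q) * ((mp p)⁻¹ * Jp p)
        ≤ ∑ p : ↥P, Jp p := Finset.sum_le_sum fun p _ => hstep p
      _ = ∑ p : ↥P, ∫⁻ x in A p, (‖x - T x‖₊ : ℝ≥0∞) ∂μ := by
          refine Finset.sum_congr rfl fun p _ => ?_
          rw [hJp]
          refine setLIntegral_congr_fun (hAmeas p) ?_
          intro x hx
          have : T x = (p : Euc d) := hx
          simp only [this]
      _ = ∫⁻ x in ⋃ p ∈ (Finset.univ : Finset ↥P), A p, (‖x - T x‖₊ : ℝ≥0∞) ∂μ := by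
          rw [lintegral_biUnion_finset hAdisj (fun p _ => hAmeas p)]
      _ = ∫⁻ x, (‖x - T x‖₊ : ℝ≥0∞) ∂μ := by
          rw [hAcover, Measure.restrict_univ]
  have hS3 : ∑ p : ↥P, ∑ q : ↥P, ENNReal.ofReal (c p q) * ((nq q)⁻¹ * Kq q)
      ≤ ∫⁻ y, (‖y - T y‖₊ : ℝ≥0∞) ∂ν := by
    have hstep : ∀ q : ↥P, ∑ p : ↥P, ENNReal.ofReal (c p q) * ((nq q)⁻¹ * Kq q) ≤ Kq q := by
      intro q
      rw [← Finset.sum_mul, hcol q, ← mul_assoc]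
      calc nq q * (nq q)⁻¹ * Kq q ≤ 1 * Kq q :=
            mul_le_mul_left (ENNReal.mul_inv_le_one _) _
        _ = Kq q := one_mul _
    calc ∑ p : ↥P, ∑ q : ↥P, ENNReal.ofReal (c p q) * ((nq q)⁻¹ * Kq q)
        ≤ ∑ q : ↥P, Kq q := by
          rw [Finset.sum_comm]
          exact Finset.sum_le_sum fun q _ => hstep q
      _ = ∑ q : ↥P, ∫⁻ y in A q, (‖y - T y‖₊ : ℝ≥0∞) ∂ν := by
          refine Finset.sum_congr rfl fun q _ => ?_
          rw [hKq]
          refine setLIntegral_congr_fun (hAmeas q) ?_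
          intro y hy
          have : T y = (q : Euc d) := hy
          simp only [this]; rw [← nnnorm_neg]
          congr 1
          abel_nf
      _ = ∫⁻ y in ⋃ q ∈ (Finset.univ : Finset ↥P), A q, (‖y - T y‖₊ : ℝ≥0∞) ∂ν := by
          rw [lintegral_biUnion_finset hAdisj (fun q _ => hAmeas q)]
      _ = ∫⁻ y, (‖y - T y‖₊ : ℝ≥0∞) ∂ν := by
          rw [hAcover, Measure.restrict_univ]
  have hS2 : ∑ p : ↥P, ∑ q : ↥P, ENNReal.ofReal (c p q) * (‖(p : Euc d) - (q : Euc d)‖₊ : ℝ≥0∞)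
      = ENNReal.ofReal (∑ p, ∑ q, c p q * ‖(p : Euc d) - q‖) := by
    rw [ENNReal.ofReal_sum_of_nonneg (fun p _ => Finset.sum_nonneg fun q _ =>
      mul_nonneg (hc0 p q) (norm_nonneg _))]
    refine Finset.sum_congr rfl fun p _ => ?_
    rw [ENNReal.ofReal_sum_of_nonneg (fun q _ => mul_nonneg (hc0 p q) (norm_nonneg _))]
    refine Finset.sum_congr rfl fun q _ => ?_
    rw [ENNReal.ofReal_mul (hc0 p q), ofReal_norm, enorm_eq_nnnorm]
  calc transportCost₁ γ
      = ∑ p : ↥P, ∑ q : ↥P, ENNReal.ofReal (c p q)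
          * ∫⁻ z, (‖z.1 - z.2‖₊ : ℝ≥0∞) ∂((μp p).prod (νq q)) := hcost_expand
    _ ≤ ∑ p : ↥P, ∑ q : ↥P, ENNReal.ofReal (c p q)
          * ((mp p)⁻¹ * Jp p + (‖(p : Euc d) - (q : Euc d)‖₊ : ℝ≥0∞) + (nq q)⁻¹ * Kq q) :=
        Finset.sum_le_sum fun p _ => Finset.sum_le_sum fun q _ =>
          mul_le_mul_right (hIbound p q) _
    _ = (∑ p : ↥P, ∑ q : ↥P, ENNReal.ofReal (c p q) * ((mp p)⁻¹ * Jp p))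
        + (∑ p : ↥P, ∑ q : ↥P, ENNReal.ofReal (c p q) * (‖(p : Euc d) - (q : Euc d)‖₊ : ℝ≥0∞))
        + ∑ p : ↥P, ∑ q : ↥P, ENNReal.ofReal (c p q) * ((nq q)⁻¹ * Kq q) := by
        simp only [mul_add, Finset.sum_add_distrib]
    _ ≤ (∫⁻ x, (‖x - T x‖₊ : ℝ≥0∞) ∂μ)
        + ENNReal.ofReal (∑ p, ∑ q, c p q * ‖(p : Euc d) - q‖)
        + ∫⁻ y, (‖y - T y‖₊ : ℝ≥0∞) ∂ν := by
        rw [hS2]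
        exact add_le_add (add_le_add hS1 le_rfl) hS3
    _ = ENNReal.ofReal (∑ p, ∑ q, c p q * ‖(p : Euc d) - q‖)
        + (∫⁻ x, (‖x - T x‖₊ : ℝ≥0∞) ∂μ) + ∫⁻ x, (‖x - T x‖₊ : ℝ≥0∞) ∂ν := by
        ring

/-- **Kantorovich–Rubinstein duality.** For `μ, ν ∈ P_1(ℝ^d)`,
`W_1(μ,ν) = sup { ∫ f dμ − ∫ f dν : f 1-Lipschitz }`. -/
theorem kantorovich_rubinstein (d : ℕ) (μ ν : Measure (Euc d))
    [IsProbabilityMeasure μ] [IsProbabilityMeasure ν]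
    (hμ : finiteFirstMoment μ) (hν : finiteFirstMoment ν) :
    (wassersteinOne μ ν).toReal =
      sSup {r : ℝ | ∃ f : Euc d → ℝ, LipschitzWith 1 f ∧
        r = (∫ x, f x ∂μ) - ∫ x, f x ∂ν} := by
  classical
  set S : Set ℝ := {r : ℝ | ∃ f : Euc d → ℝ, LipschitzWith 1 f ∧
    r = (∫ x, f x ∂μ) - ∫ x, f x ∂ν} with hS
  have hWne : wassersteinOne μ ν ≠ ∞ := wassersteinOne_ne_top hμ hν
  have hSne : S.Nonempty := by
    refine ⟨0, fun _ => 0, ?_, by simp⟩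
    exact (LipschitzWith.const 0).weaken (zero_le_one)
  -- every element of S is at most (cost γ).toReal for any coupling γ
  have hmem_le : ∀ r ∈ S, ∀ (γ : Measure (Euc d × Euc d)), IsCoupling γ μ ν →
      transportCost₁ γ ≠ ∞ → r ≤ (transportCost₁ γ).toReal := by
    rintro r ⟨f, hf, rfl⟩ γ hγ hfin
    have h := easy_direction hμ hν hγ hf
    by_cases hr : (∫ x, f x ∂μ) - ∫ x, f x ∂ν ≤ 0
    · exact hr.trans ENNReal.toReal_nonneg
    · push_neg at hr
      have := ENNReal.toReal_mono hfin h
      rwa [ENNReal.toReal_ofReal hr.le] at this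
  have hprod_fin : transportCost₁ (μ.prod ν) ≠ ∞ := by
    refine ne_top_of_le_ne_top ?_ (transportCost_le (prod_isCoupling μ ν))
    exact ENNReal.add_ne_top.2 ⟨hμ, hν⟩
  have hbdd : BddAbove S := by
    refine ⟨(transportCost₁ (μ.prod ν)).toReal, ?_⟩
    intro r hr
    exact hmem_le r hr _ (prod_isCoupling μ ν) hprod_fin
  -- upper bound : sSup ≤ W
  have hupper : sSup S ≤ (wassersteinOne μ ν).toReal := by
    apply Real.sSup_le _ ENNReal.toReal_nonneg
    rintro r hrS
    obtain ⟨f, hf, hrf⟩ := hrS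
    have key : ENNReal.ofReal r ≤ wassersteinOne μ ν := by
      rw [wassersteinOne]
      refine le_iInf fun γ => ?_
      rw [hrf]
      exact easy_direction hμ hν γ.2 hf
    by_cases hr : r ≤ 0
    · exact hr.trans ENNReal.toReal_nonneg
    · push_neg at hr
      have := ENNReal.toReal_mono hWne key
      rwa [ENNReal.toReal_ofReal hr.le] at this
  -- lower bound : W ≤ sSup, via ε-approximation
  have hlower : (wassersteinOne μ ν).toReal ≤ sSup S := by
    by_contra hcon
    push_neg at hcon
    set ε : ℝ := ((wassersteinOne μ ν).toReal - sSup S) / 6 with hεdef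
    have hε : 0 < ε := by
      rw [hεdef]
      linarith
    -- discretize
    obtain ⟨P, T, hPne, hTmeas, hrange, herrμ, herrν⟩ := discretization μ ν hμ hν hε
    have : Nonempty ↥P := ⟨⟨hPne.choose, hPne.choose_spec⟩⟩
    set A : ↥P → Set (Euc d) := fun p => T ⁻¹' {(p : Euc d)} with hA
    have hAmeas : ∀ p, MeasurableSet (A p) := fun p => hTmeas (measurableSet_singleton _)
    have hAdisj : Pairwise (Function.onFun Disjoint A) := by
      intro p q hpq
      apply Set.disjoint_left.2
      intro x hxp hxq
      exact hpq (Subtype.ext (by rw [← hxp, ← hxq] : (p : Euc d) = q))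
    have hAcover : ⋃ p : ↥P, A p = Set.univ := by
      apply Set.eq_univ_of_forall
      intro x
      exact Set.mem_iUnion.2 ⟨⟨T x, hrange x⟩, rfl⟩
    set a : ↥P → ℝ := fun p => (μ (A p)).toReal with ha_def
    set b : ↥P → ℝ := fun q => (ν (A q)).toReal with hb_def
    have hsum_meas : ∀ (κ : Measure (Euc d)), IsProbabilityMeasure κ →
        ∑ p : ↥P, κ (A p) = 1 := by
      intro κ hκ
      have h1 : ∑ p : ↥P, κ (A p) = κ (⋃ p ∈ (Finset.univ : Finset ↥P), A p) := by
        rw [measure_biUnion_finset]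
        · intro p _ q _ hpq
          exact hAdisj hpq
        · exact fun p _ => hAmeas p
      rw [h1]
      have : ⋃ p ∈ (Finset.univ : Finset ↥P), A p = ⋃ p : ↥P, A p := by
        simp
      rw [this, hAcover]
      exact measure_univ
    have hsa : ∑ p, a p = 1 := by
      rw [ha_def, ← ENNReal.toReal_sum (fun p _ => measure_ne_top μ _),
        hsum_meas μ ‹_›]
      simp
    have hsb : ∑ q, b q = 1 := by
      rw [hb_def, ← ENNReal.toReal_sum (fun q _ => measure_ne_top ν _),
        hsum_meas ν ‹_›]
      simp
    -- finite duality
    obtain ⟨c, f, hc0, hc1, hc2, hflip, hcf⟩ :=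
      finite_duality (fun p : ↥P => (p : Euc d)) a b
        (fun p => ENNReal.toReal_nonneg) (fun q => ENNReal.toReal_nonneg) hsa hsb hε
    -- glue
    obtain ⟨γ, hγcoupling, hγcost⟩ := glue_coupling μ ν P T hTmeas hrange c hc0 hc1 hc2
    have hWle : wassersteinOne μ ν ≤ transportCost₁ γ :=
      iInf_le _ (⟨γ, hγcoupling⟩ : {γ : Measure (Euc d × Euc d) // IsCoupling γ μ ν})
    -- compare the discrete sums to the integrals of f
    have hdiscr : ∀ (κ : Measure (Euc d)), IsProbabilityMeasure κ → finiteFirstMoment κ →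
        (∫⁻ x, (‖x - T x‖₊ : ℝ≥0∞) ∂κ) ≤ ENNReal.ofReal ε →
        |(∑ p : ↥P, (κ (A p)).toReal * f (p : Euc d)) - ∫ x, f x ∂κ| ≤ ε := by
      intro κ hκ hκffm herr
      have hfTbound : ∀ x, ‖f (T x)‖ ≤ P.sup' hPne (fun p => |f p|) := by
        intro x
        rw [Real.norm_eq_abs]
        exact Finset.le_sup' (fun p => |f p|) (hrange x)
      have hfTmeas : Measurable fun x => f (T x) :=
        (hflip.continuous.measurable).comp hTmeas
      have hintfT : Integrable (fun x => f (T x)) κ := by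
        refine Integrable.mono' (integrable_const (P.sup' hPne (fun p => |f p|)))
          hfTmeas.aestronglyMeasurable ?_
        exact Filter.Eventually.of_forall hfTbound
      have hintf : Integrable f κ := lipschitz_integrable hκffm hflip
      have herrmeas : Measurable fun x : Euc d => ‖x - T x‖ :=
        (measurable_id.sub hTmeas).norm
      have hinterr : Integrable (fun x : Euc d => ‖x - T x‖) κ := by
        refine ⟨herrmeas.aestronglyMeasurable, ?_⟩
        rw [hasFiniteIntegral_iff_ofReal (Filter.Eventually.of_forall fun x => norm_nonneg _)]
        have h1 : ∀ x : Euc d, ENNReal.ofReal ‖x - T x‖ = (‖x - T x‖₊ : ℝ≥0∞) :=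
          fun x => (ofReal_norm _).trans (enorm_eq_nnnorm _)
        simp only [h1]
        exact lt_of_le_of_lt herr ENNReal.ofReal_lt_top
      have herr_int : ∫ x, ‖x - T x‖ ∂κ ≤ ε := by
        rw [integral_eq_lintegral_of_nonneg_ae
          (Filter.Eventually.of_forall fun x => norm_nonneg _) herrmeas.aestronglyMeasurable]
        have h1 : ∀ x : Euc d, ENNReal.ofReal ‖x - T x‖ = (‖x - T x‖₊ : ℝ≥0∞) :=
          fun x => (ofReal_norm _).trans (enorm_eq_nnnorm _)
        simp only [h1]
        calc (∫⁻ x, (‖x - T x‖₊ : ℝ≥0∞) ∂κ).toReal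
            ≤ (ENNReal.ofReal ε).toReal := ENNReal.toReal_mono ofReal_ne_top herr
          _ = ε := ENNReal.toReal_ofReal hε.le
      have heq : ∑ p : ↥P, (κ (A p)).toReal * f (p : Euc d) = ∫ x, f (T x) ∂κ := by
        have e0 : ∫ x, f (T x) ∂κ = ∫ x in ⋃ p : ↥P, A p, f (T x) ∂κ := by
          rw [hAcover, Measure.restrict_univ]
        rw [e0, integral_iUnion_fintype hAmeas hAdisj (fun p => hintfT.integrableOn)]
        refine Finset.sum_congr rfl fun p _ => ?_
        have e1 : ∫ x in A p, f (T x) ∂κ = ∫ _x in A p, f (p : Euc d) ∂κ := by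
          refine setIntegral_congr_fun (hAmeas p) ?_
          intro x hx
          have h2 : T x = (p : Euc d) := hx
          show f (T x) = f (p : Euc d)
          rw [h2]
        rw [e1, setIntegral_const, smul_eq_mul]
        rfl
      rw [heq]
      have hsub : (∫ x, f (T x) ∂κ) - ∫ x, f x ∂κ = ∫ x, (f (T x) - f x) ∂κ :=
        (integral_sub hintfT hintf).symm
      rw [hsub]
      calc |∫ x, (f (T x) - f x) ∂κ| ≤ ∫ x, |f (T x) - f x| ∂κ := by
            simpa [Real.norm_eq_abs] using
              norm_integral_le_integral_norm (fun x => f (T x) - f x) (μ := κ)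
        _ ≤ ∫ x, ‖x - T x‖ ∂κ := by
            refine integral_mono (hintfT.sub hintf).abs hinterr ?_
            intro x
            have := hflip.dist_le_mul (T x) x
            simp only [NNReal.coe_one, one_mul, Real.dist_eq, dist_eq_norm] at this
            calc |f (T x) - f x| ≤ ‖T x - x‖ := this
              _ = ‖x - T x‖ := norm_sub_rev _ _
        _ ≤ ε := herr_int
    have hdμ := hdiscr μ ‹_› hμ herrμ
    have hdν := hdiscr ν ‹_› hν herrν
    -- the element of S
    set D : ℝ := (∫ x, f x ∂μ) - ∫ x, f x ∂ν with hD
    have hDS : D ∈ S := ⟨f, hflip, rfl⟩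
    have hDle : D ≤ sSup S := le_csSup hbdd hDS
    -- chain of inequalities
    have habs1 : ∑ p : ↥P, a p * f (p : Euc d) ≤ (∫ x, f x ∂μ) + ε := by
      have := abs_le.1 hdμ
      rw [ha_def]
      linarith [this.2]
    have habs2 : (∫ x, f x ∂ν) - ε ≤ ∑ q : ↥P, b q * f (q : Euc d) := by
      have := abs_le.1 hdν
      rw [hb_def]
      linarith [this.1]
    have hcsum : ∑ p, ∑ q, c p q * ‖(p : Euc d) - (q : Euc d)‖ ≤ sSup S + 3 * ε := by
      calc ∑ p, ∑ q, c p q * ‖(p : Euc d) - (q : Euc d)‖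
          ≤ (∑ p, a p * f (p : Euc d)) - (∑ q, b q * f (q : Euc d)) + ε := hcf
        _ ≤ ((∫ x, f x ∂μ) + ε) - ((∫ x, f x ∂ν) - ε) + ε := by linarith
        _ = D + 3 * ε := by rw [hD]; ring
        _ ≤ sSup S + 3 * ε := by linarith
    have hcsum_nonneg : 0 ≤ ∑ p, ∑ q, c p q * ‖(p : Euc d) - (q : Euc d)‖ :=
      Finset.sum_nonneg fun p _ => Finset.sum_nonneg fun q _ =>
        mul_nonneg (hc0 p q) (norm_nonneg _)
    -- final ENNReal computation
    have hfinal : (wassersteinOne μ ν).toReal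
        ≤ (∑ p, ∑ q, c p q * ‖(p : Euc d) - (q : Euc d)‖) + ε + ε := by
      have hle : wassersteinOne μ ν
          ≤ ENNReal.ofReal ((∑ p, ∑ q, c p q * ‖(p : Euc d) - (q : Euc d)‖) + ε + ε) := by
        calc wassersteinOne μ ν ≤ transportCost₁ γ := hWle
          _ ≤ ENNReal.ofReal (∑ p, ∑ q, c p q * ‖(p : Euc d) - (q : Euc d)‖)
              + (∫⁻ x, (‖x - T x‖₊ : ℝ≥0∞) ∂μ) + ∫⁻ x, (‖x - T x‖₊ : ℝ≥0∞) ∂ν := hγcost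
          _ ≤ ENNReal.ofReal (∑ p, ∑ q, c p q * ‖(p : Euc d) - (q : Euc d)‖)
              + ENNReal.ofReal ε + ENNReal.ofReal ε :=
            add_le_add (add_le_add le_rfl herrμ) herrν
          _ = ENNReal.ofReal ((∑ p, ∑ q, c p q * ‖(p : Euc d) - (q : Euc d)‖) + ε + ε) := by
            rw [← ENNReal.ofReal_add hcsum_nonneg hε.le,
              ← ENNReal.ofReal_add (by linarith) hε.le]
      calc (wassersteinOne μ ν).toReal
          ≤ (ENNReal.ofReal ((∑ p, ∑ q, c p q * ‖(p : Euc d) - (q : Euc d)‖) + ε + ε)).toReal :=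
            ENNReal.toReal_mono ofReal_ne_top hle
        _ = _ := ENNReal.toReal_ofReal (by linarith)
    have : (wassersteinOne μ ν).toReal ≤ sSup S + 5 * ε := by linarith
    rw [hεdef] at this
    linarith
  exact le_antisymm hlower hupper
end
end

section
/- Fix d ≥ 3 and let μ be the uniform probability measure on [0,1]^d. Then for every probability measure ρ on ℝ^d supported on at most n points, W_1(ρ, μ) ≥ n^{−1/d} / (108 d). -/
noncomputable section

open MeasureTheory ENNReal

/-- The unit cube `[0,1]^d`. -/
def unitCube (d : ℕ) : Set (Euc d) :=
  {x | ∀ i, x i ∈ Set.Icc (0 : ℝ) 1}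

/-- The uniform probability measure on `[0,1]^d`: the restriction of Lebesgue measure to the
unit cube. -/
def uniformCube (d : ℕ) : Measure (Euc d) :=
  volume.restrict (unitCube d)

/-- Coordinate distance is bounded by Euclidean distance. -/
lemma coord_dist_le {d : ℕ} (x y : Euc d) (i : Fin d) : |x i - y i| ≤ dist x y := by
  rw [EuclideanSpace.dist_eq]
  have h1 : |x i - y i| = Real.sqrt (dist (x i) (y i) ^ 2) := by
    rw [Real.dist_eq, Real.sqrt_sq_eq_abs, abs_abs]
  rw [h1]
  apply Real.sqrt_le_sqrt
  exact Finset.single_le_sum (f := fun j => dist (x j) (y j) ^ 2)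
    (fun j _ => sq_nonneg _) (Finset.mem_univ i)

/-- Volume of a Euclidean closed ball is at most `(2r)^d`. -/
lemma volume_closedBall_le_aux (d : ℕ) (x : Euc d) (r : ℝ) (hr : 0 ≤ r) :
    volume (Metric.closedBall x r) ≤ ENNReal.ofReal ((2 * r) ^ d) := by
  have hmp := EuclideanSpace.volume_preserving_symm_measurableEquiv_toLp (Fin d)
  set e := (MeasurableEquiv.toLp 2 (Fin d → ℝ)).symm
  set B : Set (Fin d → ℝ) := Set.univ.pi fun i => Set.Icc (x i - r) (x i + r)
  have hBm : MeasurableSet B := MeasurableSet.univ_pi fun i => measurableSet_Icc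
  have hsub : Metric.closedBall x r ⊆ e ⁻¹' B := by
    intro y hy
    intro i _
    have h := coord_dist_le y x i
    have hd : dist y x ≤ r := Metric.mem_closedBall.1 hy
    have : |y i - x i| ≤ r := h.trans hd
    have := abs_le.1 this
    have hey : e y i = y i := rfl
    constructor <;> rw [hey] <;> [linarith [this.1]; linarith [this.2]]
  calc volume (Metric.closedBall x r) ≤ volume (e ⁻¹' B) := measure_mono hsub
    _ = volume B := hmp.measure_preimage hBm.nullMeasurableSet
    _ = ∏ i : Fin d, volume (Set.Icc (x i - r) (x i + r)) := volume_pi_pi _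
    _ = ∏ _i : Fin d, ENNReal.ofReal (2 * r) := by
        refine Finset.prod_congr rfl fun i _ => ?_
        rw [Real.volume_Icc]; ring_nf
    _ = ENNReal.ofReal ((2 * r) ^ d) := by
        rw [Finset.prod_const, Finset.card_univ, Fintype.card_fin,
          ← ENNReal.ofReal_pow (by linarith)]

/-- For `d ≥ 3`, any probability measure supported on at most `n` points is at `W_1`-distance at
least `n^{-1/d} / (108 d)` from the uniform measure on `[0,1]^d`. -/
theorem wasserstein_lower_bound_discrete (d : ℕ) (hd : 3 ≤ d) (n : ℕ)
    (ρ : Measure (Euc d)) [IsProbabilityMeasure ρ]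
    (S : Finset (Euc d)) (hcard : S.card ≤ n) (hρS : ρ (S : Set (Euc d)) = 1) :
    ENNReal.ofReal ((n : ℝ) ^ (-(1 : ℝ) / d) / (108 * d)) ≤
      wassersteinOne ρ (uniformCube d) := by
  have hn : 1 ≤ n := by
    rcases Nat.eq_zero_or_pos n with h | h
    · exfalso
      subst h
      have : S = ∅ := Finset.card_eq_zero.1 (Nat.le_zero.1 hcard)
      rw [this] at hρS
      simp at hρS
    · exact h
  have hn' : (0:ℝ) < n := by exact_mod_cast hn
  have hd0 : (0:ℝ) < d := by positivity
  set P : ℝ := (n : ℝ) ^ (-(1 : ℝ) / d) with hP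
  have hP0 : 0 < P := Real.rpow_pos_of_pos hn' _
  set r : ℝ := P / 4 with hrdef
  have hr0 : 0 < r := by positivity
  -- key computation : n * (2r)^d ≤ 1/8
  have hpow : (n:ℝ) * (2 * r) ^ d ≤ 1 / 8 := by
    have h2r : 2 * r = P / 2 := by rw [hrdef]; ring
    have hPd : P ^ d = 1 / n := by
      rw [hP, ← Real.rpow_natCast ((n:ℝ) ^ (-(1:ℝ)/d)) d, ← Real.rpow_mul (le_of_lt hn')]
      rw [div_mul_cancel₀ _ (ne_of_gt hd0)]
      rw [Real.rpow_neg_one]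
      exact one_div _ |>.symm
    have h2d : (8:ℝ) ≤ 2 ^ d := by
      calc (8:ℝ) = 2 ^ 3 := by norm_num
        _ ≤ 2 ^ d := pow_le_pow_right₀ (by norm_num) hd
    rw [h2r, div_pow, hPd]
    have hre : (n:ℝ) * (1 / (n:ℝ) / 2 ^ d) = 1 / 2 ^ d := by
      field_simp
    rw [hre, div_le_div_iff₀ (by positivity) (by norm_num)]
    linarith
  -- the neighborhood N
  set N : Set (Euc d) := ⋃ x ∈ S, Metric.closedBall x r with hNdef
  have hNm : MeasurableSet N := S.measurableSet_biUnion fun x _ => measurableSet_closedBall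
  have hμN : uniformCube d N ≤ ENNReal.ofReal (1/8) := by
    calc uniformCube d N ≤ volume N := Measure.restrict_apply_le _ _
      _ ≤ ∑ x ∈ S, volume (Metric.closedBall x r) := measure_biUnion_finset_le S _
      _ ≤ ∑ _x ∈ S, ENNReal.ofReal ((2*r)^d) :=
          Finset.sum_le_sum fun x _ => volume_closedBall_le_aux d x r (le_of_lt hr0)
      _ = S.card * ENNReal.ofReal ((2*r)^d) := by
          simp [Finset.sum_const, nsmul_eq_mul]
      _ ≤ (n:ℝ≥0∞) * ENNReal.ofReal ((2*r)^d) := by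
          exact mul_le_mul_left (by exact_mod_cast hcard) _
      _ = ENNReal.ofReal ((n:ℝ) * (2*r)^d) := by
          rw [ENNReal.ofReal_mul (by positivity), ENNReal.ofReal_natCast]
      _ ≤ ENNReal.ofReal (1/8) := ENNReal.ofReal_le_ofReal hpow
  refine le_iInf fun ⟨γ, hfst, hsnd⟩ => ?_
  -- the "far" set A
  set A : Set (Euc d × Euc d) := {z | r ≤ dist z.1 z.2} with hAdef
  have hdistm : Measurable fun z : Euc d × Euc d => dist z.1 z.2 :=
    (continuous_fst.dist continuous_snd).measurable
  have hAm : MeasurableSet A := measurableSet_le measurable_const hdistm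
  have hγuniv : γ Set.univ = 1 := by
    have := Measure.map_apply (μ := γ) measurable_fst MeasurableSet.univ
    rw [hfst] at this
    simpa using this.symm
  have hγS : γ {z : Euc d × Euc d | z.1 ∉ S} = 0 := by
    have hSm : MeasurableSet ((S : Set (Euc d))ᶜ) := S.measurableSet.compl
    have := Measure.map_apply (μ := γ) measurable_fst hSm
    rw [hfst] at this
    have hρc : ρ ((S : Set (Euc d))ᶜ) = 0 :=
      (prob_compl_eq_zero_iff S.measurableSet).2 hρS
    rw [hρc] at this
    exact this.symm
  have hγN : γ {z : Euc d × Euc d | z.2 ∈ N} = uniformCube d N := by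
    have := Measure.map_apply (μ := γ) measurable_snd hNm
    rw [hsnd] at this
    exact this.symm
  have hAc : Aᶜ ⊆ {z : Euc d × Euc d | z.1 ∉ S} ∪ {z : Euc d × Euc d | z.2 ∈ N} := by
    intro z hz
    simp only [hAdef, Set.mem_compl_iff, Set.mem_setOf_eq, not_le] at hz
    by_cases h1 : z.1 ∈ S
    · right
      exact Set.mem_biUnion h1 (by
        simp only [Metric.mem_closedBall]
        rw [dist_comm]
        exact le_of_lt hz)
    · left; exact h1
  have hγAc : γ Aᶜ ≤ ENNReal.ofReal (1/8) := by
    calc γ Aᶜ ≤ γ ({z : Euc d × Euc d | z.1 ∉ S} ∪ {z : Euc d × Euc d | z.2 ∈ N}) :=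
          measure_mono hAc
      _ ≤ γ {z : Euc d × Euc d | z.1 ∉ S} + γ {z : Euc d × Euc d | z.2 ∈ N} :=
          measure_union_le _ _
      _ ≤ 0 + ENNReal.ofReal (1/8) := by rw [hγS, hγN]; gcongr
      _ = ENNReal.ofReal (1/8) := by rw [zero_add]
  have hγA : ENNReal.ofReal (7/8) ≤ γ A := by
    have hsum : γ A + γ Aᶜ = 1 := by rw [measure_add_measure_compl hAm, hγuniv]
    have h78 : ENNReal.ofReal (7/8) + ENNReal.ofReal (1/8) = 1 := by
      rw [← ENNReal.ofReal_add (by norm_num) (by norm_num)]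
      norm_num
    have hAcfin : γ Aᶜ ≠ ⊤ := ne_top_of_le_ne_top ofReal_ne_top hγAc
    have hA_eq : γ A = 1 - γ Aᶜ := by
      rw [← hsum, ENNReal.add_sub_cancel_right hAcfin]
    rw [hA_eq]
    refine ENNReal.le_sub_of_add_le_right hAcfin ?_
    calc ENNReal.ofReal (7/8) + γ Aᶜ ≤ ENNReal.ofReal (7/8) + ENNReal.ofReal (1/8) := by gcongr
      _ = 1 := h78
  -- lower bound cost
  have hcost : ENNReal.ofReal r * γ A ≤ transportCost₁ γ := by
    calc ENNReal.ofReal r * γ A = ∫⁻ _z in A, ENNReal.ofReal r ∂γ := by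
          rw [setLIntegral_const, mul_comm]
      _ ≤ ∫⁻ z in A, (‖z.1 - z.2‖₊ : ℝ≥0∞) ∂γ := by
          refine setLIntegral_mono (by fun_prop) fun z hz => ?_
          have : r ≤ ‖z.1 - z.2‖ := by rw [← dist_eq_norm]; exact hz
          calc ENNReal.ofReal r ≤ ENNReal.ofReal ‖z.1 - z.2‖ := ENNReal.ofReal_le_ofReal this
            _ = (‖z.1 - z.2‖₊ : ℝ≥0∞) := ofReal_norm _
      _ ≤ ∫⁻ z, (‖z.1 - z.2‖₊ : ℝ≥0∞) ∂γ := setLIntegral_le_lintegral _ _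
  have hfinal : ENNReal.ofReal ((n : ℝ) ^ (-(1 : ℝ) / d) / (108 * d)) ≤
      ENNReal.ofReal r * ENNReal.ofReal (7/8) := by
    rw [← ENNReal.ofReal_mul (le_of_lt hr0)]
    apply ENNReal.ofReal_le_ofReal
    rw [hrdef, ← hP]
    have h324 : (324:ℝ) ≤ 108 * d := by
      have : (3:ℝ) ≤ d := by exact_mod_cast hd
      nlinarith
    rw [div_le_iff₀ (by positivity : (0:ℝ) < 108 * d)]
    nlinarith [mul_le_mul_of_nonneg_left h324 hP0.le]
  calc ENNReal.ofReal ((n : ℝ) ^ (-(1 : ℝ) / d) / (108 * d))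
      ≤ ENNReal.ofReal r * ENNReal.ofReal (7/8) := hfinal
    _ ≤ ENNReal.ofReal r * γ A := by gcongr
    _ ≤ transportCost₁ γ := hcost
end
end

section
/- There is a universal constant C > 0 such that for every d ≥ 1 and every Borel probability measure μ supported in the closed unit ball of ℝ^d, if X_1, …, X_n are i.i.d. with law μ and μ_n is the empirical measure, then E SW_1(μ_n, μ) ≤ C n^{−1/2}, where SW_1 is the sliced 1-Wasserstein distance. -/
noncomputable section

open MeasureTheory ENNReal
open scoped RealInnerProductSpace

/-- The empirical measure `μ_n(ω) = (1/n) ∑_{i} δ_{X_i(ω)}`. -/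
def empiricalMeasure {d : ℕ} {Ω : Type*} [MeasurableSpace Ω] (n : ℕ)
    (X : Fin n → Ω → Euc d) (ω : Ω) : Measure (Euc d) :=
  (n : ℝ≥0∞)⁻¹ • ∑ i : Fin n, Measure.dirac (X i ω)

/-- The standard Gaussian measure `N(0, I_d)` on `ℝ^d`. -/
def stdGaussian (d : ℕ) : Measure (Euc d) :=
  (Measure.pi fun _ : Fin d => ProbabilityTheory.gaussianReal 0 1).map
    ⇑(EuclideanSpace.equiv (Fin d) ℝ).symm

/-- The uniform probability measure on the unit sphere `S^{d-1}`, realized as the law of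
`Z/‖Z‖` for a standard Gaussian vector `Z` (a measure on `ℝ^d` concentrated on the sphere). -/
def sphereUniform (d : ℕ) : Measure (Euc d) :=
  (stdGaussian d).map fun x => ‖x‖⁻¹ • x

/-- The sliced `1`-Wasserstein distance
`SW_1(μ,ν) = ∫_{S^{d-1}} W_1(Π^θ_# μ, Π^θ_# ν) dσ(θ)`, where `Π^θ(x) = ⟨θ, x⟩` and `σ` is the
uniform probability measure on the sphere. -/
def slicedWassersteinOne {d : ℕ} (μ ν : Measure (Euc d)) : ℝ≥0∞ :=
  ∫⁻ θ, wassersteinOne (μ.map fun x => ⟪θ, x⟫) (ν.map fun x => ⟪θ, x⟫) ∂(sphereUniform d)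


section Aux
open Set Filter Topology ProbabilityTheory

section Quantile
variable (ν : Measure ℝ) [IsProbabilityMeasure ν]

/-- Quantile function. -/
def qf (u : ℝ) : ℝ := sInf {y | u ≤ cdf ν y}

variable {u x : ℝ}

lemma qf_set_nonempty (hu : u < 1) : {y | u ≤ cdf ν y}.Nonempty := by
  have h := (tendsto_cdf_atTop ν).eventually (eventually_ge_nhds hu)
  exact h.exists

lemma qf_set_bddBelow (hu : 0 < u) : BddBelow {y | u ≤ cdf ν y} := by
  obtain ⟨z, hz⟩ := ((tendsto_cdf_atBot ν).eventually (eventually_lt_nhds hu)).exists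
  refine ⟨z, fun y hy => ?_⟩
  by_contra hzy
  push_neg at hzy
  exact absurd (hy.trans (monotone_cdf ν hzy.le)) (not_le.2 hz)

lemma qf_le_iff (hu : u ∈ Ioo (0:ℝ) 1) : qf ν u ≤ x ↔ u ≤ cdf ν x := by
  constructor
  · intro h
    have hne := qf_set_nonempty ν hu.2
    have hall : ∀ᶠ y in 𝓝[>] x, u ≤ cdf ν y := by
      filter_upwards [self_mem_nhdsWithin] with y (hy : x < y)
      obtain ⟨z, hz, hzy⟩ := exists_lt_of_csInf_lt hne (lt_of_le_of_lt h hy)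
      exact hz.trans (monotone_cdf ν hzy.le)
    have hc : Tendsto (cdf ν) (𝓝[>] x) (𝓝 (cdf ν x)) :=
      ((cdf ν).right_continuous x).mono_left (nhdsWithin_mono x Ioi_subset_Ici_self)
    exact ge_of_tendsto hc hall
  · intro h
    exact csInf_le (qf_set_bddBelow ν hu.1) h

lemma qf_monotoneOn : MonotoneOn (qf ν) (Ioo (0:ℝ) 1) := by
  intro u hu v hv huv
  exact csInf_le_csInf (qf_set_bddBelow ν hu.1) (qf_set_nonempty ν hv.2)
    (fun y hy => le_trans huv hy)

lemma qf_aemeasurable : AEMeasurable (qf ν) (volume.restrict (Ioo (0:ℝ) 1)) :=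
  aemeasurable_restrict_of_monotoneOn measurableSet_Ioo (qf_monotoneOn ν)

lemma volume_Ioo_inter_Iic {c : ℝ} (h0 : 0 ≤ c) (h1 : c ≤ 1) :
    volume (Ioo (0:ℝ) 1 ∩ Iic c) = ENNReal.ofReal c := by
  apply le_antisymm
  · refine le_trans (measure_mono (fun y hy => mem_Ioc.2 ⟨hy.1.1, hy.2⟩)) ?_
    rw [Real.volume_Ioc, sub_zero]
  · have : Ioo (0:ℝ) c ⊆ Ioo (0:ℝ) 1 ∩ Iic c :=
      fun y hy => ⟨⟨hy.1, lt_of_lt_of_le hy.2 h1⟩, hy.2.le⟩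
    calc ENNReal.ofReal c = volume (Ioo (0:ℝ) c) := by rw [Real.volume_Ioo, sub_zero]
      _ ≤ _ := measure_mono this

instance : IsProbabilityMeasure (volume.restrict (Ioo (0:ℝ) 1)) := by
  constructor
  simp [Real.volume_Ioo]

lemma map_qf : (volume.restrict (Ioo (0:ℝ) 1)).map (qf ν) = ν := by
  have hqm := qf_aemeasurable ν
  have : IsProbabilityMeasure ((volume.restrict (Ioo (0:ℝ) 1)).map (qf ν)) :=
    Measure.isProbabilityMeasure_map hqm
  refine Measure.ext_of_Iic _ _ (fun x => ?_)
  rw [Measure.map_apply_of_aemeasurable hqm measurableSet_Iic,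
    Measure.restrict_apply' measurableSet_Ioo]
  have hset : Ioo (0:ℝ) 1 ∩ qf ν ⁻¹' Iic x = Ioo (0:ℝ) 1 ∩ Iic (cdf ν x) := by
    ext u
    constructor
    · rintro ⟨hu1, hu2⟩
      exact ⟨hu1, (qf_le_iff ν hu1).1 hu2⟩
    · rintro ⟨hu1, hu2⟩
      exact ⟨hu1, (qf_le_iff ν hu1).2 hu2⟩
  rw [inter_comm, hset, volume_Ioo_inter_Iic (cdf_nonneg ν x) (cdf_le_one ν x), ofReal_cdf]

end Quantile


lemma wassersteinOne_le_lintegral_cdf (ν₁ ν₂ : Measure ℝ)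
    [IsProbabilityMeasure ν₁] [IsProbabilityMeasure ν₂] :
    wassersteinOne ν₁ ν₂ ≤ ∫⁻ t, ENNReal.ofReal |cdf ν₁ t - cdf ν₂ t| := by
  set ρ : Measure ℝ := volume.restrict (Ioo (0:ℝ) 1) with hρ
  have h₁ := qf_aemeasurable ν₁
  have h₂ := qf_aemeasurable ν₂
  set g₁ : ℝ → ℝ := h₁.mk _ with hg₁def
  set g₂ : ℝ → ℝ := h₂.mk _ with hg₂def
  have hg₁ : Measurable g₁ := h₁.measurable_mk
  have hg₂ : Measurable g₂ := h₂.measurable_mk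
  have he₁ : qf ν₁ =ᵐ[ρ] g₁ := h₁.ae_eq_mk
  have he₂ : qf ν₂ =ᵐ[ρ] g₂ := h₂.ae_eq_mk
  set γ : Measure (ℝ × ℝ) := ρ.map (fun u => (g₁ u, g₂ u)) with hγdef
  have hpair : Measurable fun u => (g₁ u, g₂ u) := hg₁.prodMk hg₂
  have hcoup : IsCoupling γ ν₁ ν₂ := by
    constructor
    · rw [hγdef, Measure.map_map measurable_fst hpair]
      have : (Prod.fst ∘ fun u => (g₁ u, g₂ u)) = g₁ := rfl
      rw [this, ← Measure.map_congr he₁, map_qf]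
    · rw [hγdef, Measure.map_map measurable_snd hpair]
      have : (Prod.snd ∘ fun u => (g₁ u, g₂ u)) = g₂ := rfl
      rw [this, ← Measure.map_congr he₂, map_qf]
  refine le_trans (iInf_le _ (⟨γ, hcoup⟩ : {γ : Measure (ℝ × ℝ) // IsCoupling γ ν₁ ν₂})) ?_
  have hcost : transportCost₁ γ = ∫⁻ u, (‖g₁ u - g₂ u‖₊ : ℝ≥0∞) ∂ρ := by
    rw [hγdef, transportCost₁,
      lintegral_map (f := fun z : ℝ × ℝ => (‖z.1 - z.2‖₊ : ℝ≥0∞)) ((measurable_fst.sub measurable_snd).nnnorm.coe_nnreal_ennreal) hpair]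
  rw [hcost]
  -- the strip between the two quantile functions
  set S : Set (ℝ × ℝ) := {p | g₁ p.1 ⊓ g₂ p.1 < p.2 ∧ p.2 < g₁ p.1 ⊔ g₂ p.1} with hSdef
  have hS : MeasurableSet S := by
    apply MeasurableSet.inter
    · exact measurableSet_lt ((hg₁.comp measurable_fst).inf (hg₂.comp measurable_fst))
        measurable_snd
    · exact measurableSet_lt measurable_snd
        ((hg₁.comp measurable_fst).sup (hg₂.comp measurable_fst))
  have hstep : ∀ u, (‖g₁ u - g₂ u‖₊ : ℝ≥0∞)
      = ∫⁻ t, S.indicator (fun _ => (1:ℝ≥0∞)) (u, t) ∂volume := by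
    intro u
    have hsl : ∀ t, S.indicator (fun _ => (1:ℝ≥0∞)) (u, t)
        = (Ioo (g₁ u ⊓ g₂ u) (g₁ u ⊔ g₂ u)).indicator (fun _ => (1:ℝ≥0∞)) t := by
      intro t
      by_cases ht : t ∈ Ioo (g₁ u ⊓ g₂ u) (g₁ u ⊔ g₂ u)
      · rw [indicator_of_mem ht, indicator_of_mem (show (u, t) ∈ S from ⟨ht.1, ht.2⟩)]
      · rw [indicator_of_notMem ht,
          indicator_of_notMem (show (u, t) ∉ S from fun hc => ht ⟨hc.1, hc.2⟩)]
    rw [lintegral_congr hsl, lintegral_indicator measurableSet_Ioo,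
      ← enorm_eq_nnnorm, Real.enorm_eq_ofReal_abs]
    simp only [lintegral_one, Measure.restrict_apply_univ, Real.volume_Ioo]
    rw [max_sub_min_eq_abs, abs_sub_comm]
  calc ∫⁻ u, (‖g₁ u - g₂ u‖₊ : ℝ≥0∞) ∂ρ
      = ∫⁻ u, ∫⁻ t, S.indicator (fun _ => (1:ℝ≥0∞)) (u, t) ∂volume ∂ρ := by
        exact lintegral_congr hstep
    _ = ∫⁻ t, ∫⁻ u, S.indicator (fun _ => (1:ℝ≥0∞)) (u, t) ∂ρ ∂volume := by
        apply lintegral_lintegral_swap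
        exact ((measurable_one.indicator hS).comp measurable_id).aemeasurable
    _ ≤ ∫⁻ t, ENNReal.ofReal |cdf ν₁ t - cdf ν₂ t| ∂volume := by
        apply lintegral_mono
        intro t
        dsimp only
        have hind : ∀ u, S.indicator (fun _ => (1:ℝ≥0∞)) (u, t)
            = ({u | (u, t) ∈ S}).indicator (fun _ => (1:ℝ≥0∞)) u := by
          intro u
          by_cases hu : (u, t) ∈ S
          · rw [indicator_of_mem hu, indicator_of_mem (show u ∈ {u | (u, t) ∈ S} from hu)]
          · rw [indicator_of_notMem hu,
              indicator_of_notMem (show u ∉ {u | (u, t) ∈ S} from hu)]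
        have hSm : MeasurableSet {u | (u, t) ∈ S} :=
          hS.preimage (measurable_id.prodMk measurable_const)
        rw [lintegral_congr hind, lintegral_indicator hSm]
        simp only [lintegral_one, Measure.restrict_apply_univ]
        -- ρ of the slice set is at most |F₁ t - F₂ t|
        set N : Set ℝ := {u | ¬ qf ν₁ u = g₁ u} ∪ {u | ¬ qf ν₂ u = g₂ u} with hNdef
        have hN : ρ N = 0 := by
          apply measure_union_null
          · exact he₁
          · exact he₂
        have hsub : {u | (u, t) ∈ S}
            ⊆ ({u | (qf ν₁ u ⊓ qf ν₂ u < t ∧ t < qf ν₁ u ⊔ qf ν₂ u)} ∪ N) := by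
          intro u hu
          by_cases h1 : qf ν₁ u = g₁ u
          · by_cases h2 : qf ν₂ u = g₂ u
            · left; rw [mem_setOf_eq, h1, h2]; exact hu
            · right; right; exact h2
          · right; left; exact h1
        refine le_trans (measure_mono hsub) (le_trans (measure_union_le _ _) ?_)
        rw [hN, add_zero]
        -- now the key Galois estimate
        have hsub2 : {u | (qf ν₁ u ⊓ qf ν₂ u < t ∧ t < qf ν₁ u ⊔ qf ν₂ u)} ∩ Ioo (0:ℝ) 1
            ⊆ Ioc (cdf ν₂ t) (cdf ν₁ t) ∪ Ioc (cdf ν₁ t) (cdf ν₂ t) := by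
          rintro u ⟨⟨hlt, hgt⟩, hu01⟩
          rcases inf_lt_iff.1 hlt with hq1 | hq2
          · -- qf ν₁ u < t, so t < qf ν₂ u
            have ht2 : t < qf ν₂ u := by
              rcases lt_sup_iff.1 hgt with h | h
              · exact absurd hq1 (not_lt.2 h.le)
              · exact h
            left
            refine ⟨?_, (qf_le_iff ν₁ hu01).1 hq1.le⟩
            by_contra hc
            push_neg at hc
            exact absurd ((qf_le_iff ν₂ hu01).2 hc) (not_le.2 ht2)
          · have ht1 : t < qf ν₁ u := by
              rcases lt_sup_iff.1 hgt with h | h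
              · exact h
              · exact absurd hq2 (not_lt.2 h.le)
            right
            refine ⟨?_, (qf_le_iff ν₂ hu01).1 hq2.le⟩
            by_contra hc
            push_neg at hc
            exact absurd ((qf_le_iff ν₁ hu01).2 hc) (not_le.2 ht1)
        rw [hρ, Measure.restrict_apply' measurableSet_Ioo]
        refine le_trans (measure_mono hsub2) (le_trans (measure_union_le _ _) ?_)
        rw [Real.volume_Ioc, Real.volume_Ioc]
        rcases le_total (cdf ν₁ t) (cdf ν₂ t) with h | h
        · rw [ENNReal.ofReal_of_nonpos (show cdf ν₁ t - cdf ν₂ t ≤ 0 by linarith), zero_add,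
            abs_sub_comm, abs_of_nonneg (by linarith)]
        · rw [ENNReal.ofReal_of_nonpos (show cdf ν₂ t - cdf ν₁ t ≤ 0 by linarith), add_zero,
            abs_of_nonneg (by linarith)]


lemma core_bound {Ω : Type} [MeasurableSpace Ω] (P : Measure Ω) [IsProbabilityMeasure P]
    (n : ℕ) (hn : 1 ≤ n) (Y : Fin n → Ω → ℝ) (hYm : ∀ i, Measurable (Y i))
    (hY01 : ∀ i ω, Y i ω = 0 ∨ Y i ω = 1)
    (hindep : ∀ i j, i ≠ j → IndepFun (Y i) (Y j) P)
    (p : ℝ) (hp : ∀ i, ∫ ω, Y i ω ∂P = p) :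
    ∫⁻ ω, ENNReal.ofReal |(n:ℝ)⁻¹ * (∑ i, Y i ω) - p| ∂P
      ≤ ENNReal.ofReal ((2 * Real.sqrt n)⁻¹) := by
  have hn0 : (0:ℝ) < n := by exact_mod_cast hn
  -- basic facts about the Y i
  have hYabs : ∀ i ω, |Y i ω| ≤ 1 := by
    intro i ω; rcases hY01 i ω with h | h <;> rw [h] <;> norm_num
  have hYint : ∀ i, Integrable (Y i) P := by
    intro i
    refine Integrable.mono' (integrable_const 1) (hYm i).aestronglyMeasurable ?_
    exact ae_of_all _ fun ω => by rw [Real.norm_eq_abs]; exact hYabs i ω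
  have hYmem : ∀ i, MemLp (Y i) 2 P := by
    intro i
    exact (memLp_top_of_bound (hYm i).aestronglyMeasurable 1
      (ae_of_all _ fun ω => by rw [Real.norm_eq_abs]; exact hYabs i ω)).mono_exponent
      le_top
  have hp01 : 0 ≤ p ∧ p ≤ 1 := by
    constructor
    · rw [← hp ⟨0, hn⟩]
      apply integral_nonneg
      intro ω; rcases hY01 ⟨0, hn⟩ ω with h | h <;> simp [h]
    · rw [← hp ⟨0, hn⟩]
      calc ∫ ω, Y ⟨0, hn⟩ ω ∂P ≤ ∫ _, (1:ℝ) ∂P := by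
            apply integral_mono (hYint _) (integrable_const 1)
            intro ω; rcases hY01 ⟨0, hn⟩ ω with h | h <;> simp [h]
        _ = 1 := by simp
  -- the centred average
  set W : Ω → ℝ := fun ω => (n:ℝ)⁻¹ * ∑ i, Y i ω with hWdef
  have hWm : Measurable W := (measurable_const.mul (Finset.measurable_sum _ fun i _ => hYm i))
  have hEW : ∫ ω, W ω ∂P = p := by
    rw [hWdef]
    simp only
    rw [integral_const_mul, integral_finset_sum _ (fun i _ => hYint i)]
    simp only [hp, Finset.sum_const, Finset.card_univ, Fintype.card_fin, nsmul_eq_mul]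
    field_simp
  set Z : Ω → ℝ := fun ω => W ω - p with hZdef
  have hZm : Measurable Z := hWm.sub measurable_const
  have hZabs : ∀ ω, |Z ω| ≤ 2 := by
    intro ω
    have h1 : |W ω| ≤ 1 := by
      rw [abs_mul, abs_of_nonneg (by positivity : (0:ℝ) ≤ (n:ℝ)⁻¹)]
      calc (n:ℝ)⁻¹ * |∑ i, Y i ω| ≤ (n:ℝ)⁻¹ * ∑ i, |Y i ω| := by
            apply mul_le_mul_of_nonneg_left (Finset.abs_sum_le_sum_abs _ _) (by positivity)
        _ ≤ (n:ℝ)⁻¹ * ∑ _i : Fin n, (1:ℝ) := by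
            apply mul_le_mul_of_nonneg_left (Finset.sum_le_sum fun i _ => hYabs i ω) (by positivity)
        _ = 1 := by simp; field_simp
    calc |Z ω| ≤ |W ω| + |p| := abs_sub _ _
      _ ≤ 1 + 1 := add_le_add h1 (by rw [abs_of_nonneg hp01.1]; exact hp01.2)
      _ = 2 := by norm_num
  -- variance computation
  have hWmem : MemLp W 2 P := by
    refine (memLp_top_of_bound hWm.aestronglyMeasurable 3 (ae_of_all _ fun ω => ?_)).mono_exponent le_top
    rw [Real.norm_eq_abs]
    have := hZabs ω
    have hZW : W ω = Z ω + p := by show W ω = W ω - p + p; ring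
    rw [hZW]
    calc |Z ω + p| ≤ |Z ω| + |p| := abs_add_le _ _
      _ ≤ 2 + 1 := add_le_add (hZabs ω) (by rw [abs_of_nonneg hp01.1]; exact hp01.2)
      _ = 3 := by norm_num
  have hvar : ∫ ω, (Z ω)^2 ∂P = variance W P := by
    rw [variance_eq_integral hWm.aemeasurable, hEW]
  have hvarsum : variance W P ≤ (4 * (n:ℝ))⁻¹ := by
    have h1 : W = (n:ℝ)⁻¹ • (∑ i, Y i) := by
      funext ω; simp [hWdef, Finset.sum_apply]
    rw [h1, variance_smul]
    have h2 : variance (∑ i, Y i) P = ∑ i, variance (Y i) P := by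
      apply IndepFun.variance_sum (fun i _ => hYmem i)
      intro i hi j hj hij
      exact hindep i j hij
    rw [h2]
    have h3 : ∀ i : Fin n, variance (Y i) P ≤ 1/4 := by
      intro i
      rw [variance_eq_sub (hYmem i)]
      have hsq : (Y i)^2 = Y i := by
        funext ω; rcases hY01 i ω with h | h <;> simp [h]
      rw [hsq, hp i]
      nlinarith [sq_nonneg (p - 1/2)]
    calc ((n:ℝ)⁻¹)^2 * ∑ i, variance (Y i) P
        ≤ ((n:ℝ)⁻¹)^2 * ∑ _i : Fin n, (1/4 : ℝ) := by
          apply mul_le_mul_of_nonneg_left (Finset.sum_le_sum fun i _ => h3 i) (by positivity)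
      _ = ((n:ℝ)⁻¹)^2 * ((n:ℝ) * (1/4)) := by simp [Finset.sum_const]; try ring
      _ = (4 * (n:ℝ))⁻¹ := by field_simp
  have hZ2int : Integrable (fun ω => (Z ω)^2) P := by
    refine Integrable.mono' (integrable_const 4) (hZm.pow_const 2).aestronglyMeasurable ?_
    refine ae_of_all _ fun ω => ?_
    rw [Real.norm_eq_abs, abs_of_nonneg (sq_nonneg _)]
    calc (Z ω)^2 = |Z ω|^2 := (sq_abs _).symm
      _ ≤ 2^2 := by apply pow_le_pow_left₀ (abs_nonneg _) (hZabs ω)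
      _ = 4 := by norm_num
  -- Cauchy-Schwarz in ℝ≥0∞
  have hconj : Real.HolderConjugate 2 2 := Real.HolderConjugate.two_two
  have hCS := ENNReal.lintegral_mul_le_Lp_mul_Lq P hconj
    (f := fun ω => ENNReal.ofReal |Z ω|) (g := fun _ => 1)
    (hZm.abs.ennreal_ofReal.aemeasurable) aemeasurable_const
  have hCS2 : ∫⁻ ω, ENNReal.ofReal |Z ω| ∂P
      ≤ (∫⁻ ω, (ENNReal.ofReal |Z ω|) ^ (2:ℝ) ∂P) ^ (1/(2:ℝ)) := by
    simpa using hCS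
  have hpt : ∀ ω, (ENNReal.ofReal |Z ω|) ^ (2:ℝ) = ENNReal.ofReal ((Z ω)^2) := by
    intro ω
    rw [ENNReal.ofReal_rpow_of_nonneg (abs_nonneg _) (by norm_num : (0:ℝ) ≤ 2)]
    congr 1
    rw [show ((2:ℝ)) = ((2:ℕ):ℝ) by norm_num, Real.rpow_natCast, sq_abs]
  have hlint : ∫⁻ ω, (ENNReal.ofReal |Z ω|) ^ (2:ℝ) ∂P = ENNReal.ofReal (∫ ω, (Z ω)^2 ∂P) := by
    rw [lintegral_congr hpt, ← ofReal_integral_eq_lintegral_ofReal hZ2int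
      (ae_of_all _ fun ω => sq_nonneg _)]
  have hfinal : (ENNReal.ofReal (∫ ω, (Z ω)^2 ∂P)) ^ (1/(2:ℝ))
      ≤ ENNReal.ofReal ((2 * Real.sqrt n)⁻¹) := by
    have h1 : ∫ ω, (Z ω)^2 ∂P ≤ (4 * (n:ℝ))⁻¹ := hvar ▸ hvarsum
    calc (ENNReal.ofReal (∫ ω, (Z ω)^2 ∂P)) ^ (1/(2:ℝ))
        ≤ (ENNReal.ofReal ((4 * (n:ℝ))⁻¹)) ^ (1/(2:ℝ)) := by
          apply ENNReal.rpow_le_rpow (ENNReal.ofReal_le_ofReal h1) (by norm_num)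
      _ = ENNReal.ofReal (((4 * (n:ℝ))⁻¹) ^ (1/(2:ℝ))) := by
          rw [ENNReal.ofReal_rpow_of_nonneg (by positivity) (by norm_num)]
      _ = ENNReal.ofReal ((2 * Real.sqrt n)⁻¹) := by
          congr 1
          rw [← Real.sqrt_eq_rpow, show (4 * (n:ℝ))⁻¹ = ((2 * Real.sqrt n)⁻¹)^2 by
            field_simp; rw [Real.sq_sqrt hn0.le]; norm_num,
            Real.sqrt_sq (by positivity)]
  calc ∫⁻ ω, ENNReal.ofReal |(n:ℝ)⁻¹ * (∑ i, Y i ω) - p| ∂P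
      = ∫⁻ ω, ENNReal.ofReal |Z ω| ∂P := rfl
    _ ≤ (∫⁻ ω, (ENNReal.ofReal |Z ω|) ^ (2:ℝ) ∂P) ^ (1/(2:ℝ)) := hCS2
    _ = (ENNReal.ofReal (∫ ω, (Z ω)^2 ∂P)) ^ (1/(2:ℝ)) := by rw [hlint]
    _ ≤ ENNReal.ofReal ((2 * Real.sqrt n)⁻¹) := hfinal


lemma inner_measurable {d : ℕ} (θ : Euc d) : Measurable fun x : Euc d => ⟪θ, x⟫ :=
  (continuous_const.inner continuous_id).measurable

lemma empirical_isProb {d n : ℕ} {Ω : Type} [MeasurableSpace Ω] (X : Fin n → Ω → Euc d)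
    (hn : 1 ≤ n) (ω : Ω) : IsProbabilityMeasure (empiricalMeasure n X ω) := by
  constructor
  rw [empiricalMeasure, Measure.smul_apply, Measure.coe_finset_sum]
  simp only [Finset.sum_apply, Measure.dirac_apply' _ MeasurableSet.univ,
    indicator_of_mem (mem_univ _), Pi.one_apply, Finset.sum_const, Finset.card_univ,
    Fintype.card_fin, nsmul_eq_mul, mul_one, smul_eq_mul]
  refine ENNReal.inv_mul_cancel ?_ (by simp)
  exact_mod_cast Nat.one_le_iff_ne_zero.mp hn

lemma empirical_apply {d n : ℕ} {Ω : Type} [MeasurableSpace Ω] (X : Fin n → Ω → Euc d)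
    (ω : Ω) {s : Set (Euc d)} (hs : MeasurableSet s) :
    empiricalMeasure n X ω s = (n : ℝ≥0∞)⁻¹ * ∑ i : Fin n, s.indicator 1 (X i ω) := by
  rw [empiricalMeasure, Measure.smul_apply, Measure.coe_finset_sum, smul_eq_mul]
  congr 1
  simp only [Finset.sum_apply]
  exact Finset.sum_congr rfl fun i _ => Measure.dirac_apply' _ hs

lemma step1 {d n : ℕ} {Ω : Type} [MeasurableSpace Ω] (X : Fin n → Ω → Euc d) (hn : 1 ≤ n)
    (μ : Measure (Euc d)) [IsProbabilityMeasure μ] (ω : Ω) (θ : Euc d) :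
    wassersteinOne ((empiricalMeasure n X ω).map fun x => ⟪θ, x⟫) (μ.map fun x => ⟪θ, x⟫)
      ≤ ∫⁻ t, ENNReal.ofReal
          |(n:ℝ)⁻¹ * (∑ i : Fin n, if ⟪θ, X i ω⟫ ≤ t then (1:ℝ) else 0)
            - (μ {x | ⟪θ, x⟫ ≤ t}).toReal| := by
  have hθm := inner_measurable θ
  haveI := empirical_isProb X hn ω
  haveI : IsProbabilityMeasure ((empiricalMeasure n X ω).map fun x => ⟪θ, x⟫) :=
    Measure.isProbabilityMeasure_map hθm.aemeasurable
  haveI : IsProbabilityMeasure (μ.map fun x => ⟪θ, x⟫) :=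
    Measure.isProbabilityMeasure_map hθm.aemeasurable
  refine le_trans (wassersteinOne_le_lintegral_cdf _ _) (le_of_eq (lintegral_congr fun t => ?_))
  congr 1
  rw [cdf_eq_real, cdf_eq_real, measureReal_def, measureReal_def]
  have hpre : MeasurableSet ((fun x : Euc d => ⟪θ, x⟫) ⁻¹' Iic t) :=
    hθm measurableSet_Iic
  have h1 : ((empiricalMeasure n X ω).map fun x => ⟪θ, x⟫) (Iic t)
      = (n : ℝ≥0∞)⁻¹ * ∑ i : Fin n, (if ⟪θ, X i ω⟫ ≤ t then 1 else 0) := by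
    rw [Measure.map_apply hθm measurableSet_Iic, empirical_apply X ω hpre]
    congr 1
  have h2 : (μ.map fun x => ⟪θ, x⟫) (Iic t) = μ {x | ⟪θ, x⟫ ≤ t} := by
    rw [Measure.map_apply hθm measurableSet_Iic]; rfl
  have h3 : (((n : ℝ≥0∞)⁻¹ * ∑ i : Fin n, (if ⟪θ, X i ω⟫ ≤ t then 1 else 0))).toReal
      = (n:ℝ)⁻¹ * (∑ i : Fin n, if ⟪θ, X i ω⟫ ≤ t then (1:ℝ) else 0) := by
    have hne : ∀ i : Fin n, i ∈ Finset.univ →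
        (if ⟪θ, X i ω⟫ ≤ t then (1:ℝ≥0∞) else 0) ≠ ⊤ := by
      intro i _
      by_cases h : ⟪θ, X i ω⟫ ≤ t
      · rw [if_pos h]; exact one_ne_top
      · rw [if_neg h]; exact zero_ne_top
    rw [ENNReal.toReal_mul, ENNReal.toReal_inv, ENNReal.toReal_natCast, ENNReal.toReal_sum hne]
    congr 1
    refine Finset.sum_congr rfl fun i _ => ?_
    by_cases h : ⟪θ, X i ω⟫ ≤ t
    · rw [if_pos h, if_pos h, ENNReal.toReal_one]
    · rw [if_neg h, if_neg h, ENNReal.toReal_zero]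
  rw [h1, h2, h3]


section Main
variable {d n : ℕ} {Ω : Type} [MeasurableSpace Ω] (P : Measure Ω) [IsProbabilityMeasure P]
  (μ : Measure (Euc d)) [IsProbabilityMeasure μ]
  (X : Fin n → Ω → Euc d)

lemma step2_pointwise (hn : 1 ≤ n) (hX : ∀ i, Measurable (X i))
    (hiid : iIndepFun X P) (hlaw : ∀ i, P.map (X i) = μ)
    (θ : Euc d) (t : ℝ) :
    ∫⁻ ω, ENNReal.ofReal
        |(n:ℝ)⁻¹ * (∑ i : Fin n, if ⟪θ, X i ω⟫ ≤ t then (1:ℝ) else 0)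
          - (μ {x | ⟪θ, x⟫ ≤ t}).toReal| ∂P
      ≤ ENNReal.ofReal ((2 * Real.sqrt n)⁻¹) := by
  have hSm : MeasurableSet {x : Euc d | ⟪θ, x⟫ ≤ t} := by
    have : {x : Euc d | ⟪θ, x⟫ ≤ t} = (fun x : Euc d => ⟪θ, x⟫) ⁻¹' Iic t := rfl
    rw [this]; exact inner_measurable θ measurableSet_Iic
  set g : Euc d → ℝ := fun x => if ⟪θ, x⟫ ≤ t then 1 else 0 with hgdef
  have hgm : Measurable g := by
    apply Measurable.ite hSm measurable_const measurable_const
  refine core_bound P n hn (fun i ω => g (X i ω)) (fun i => hgm.comp (hX i))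
    (fun i ω => by
      by_cases h : ⟪θ, X i ω⟫ ≤ t
      · exact Or.inr (if_pos h)
      · exact Or.inl (if_neg h))
    (fun i j hij => (hiid.indepFun hij).comp hgm hgm)
    ((μ {x | ⟪θ, x⟫ ≤ t}).toReal) (fun i => ?_)
  have h1 : (fun ω => g (X i ω)) = ((X i) ⁻¹' {x | ⟪θ, x⟫ ≤ t}).indicator (fun _ => (1:ℝ)) := by
    funext ω
    by_cases h : ⟪θ, X i ω⟫ ≤ t
    · rw [indicator_of_mem (show ω ∈ _ from h)]
      exact if_pos h
    · rw [indicator_of_notMem (show ω ∉ _ from h)]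
      exact if_neg h
  rw [h1, integral_indicator_const _ ((hX i) hSm), smul_eq_mul, mul_one, measureReal_def,
    ← Measure.map_apply (hX i) hSm, hlaw i]

lemma step2_t (hn : 1 ≤ n) (hX : ∀ i, Measurable (X i))
    (hiid : iIndepFun X P) (hlaw : ∀ i, P.map (X i) = μ)
    (hball : μ (Metric.closedBall (0 : Euc d) 1) = 1)
    (θ : Euc d) (hθ : ‖θ‖ ≤ 1) :
    ∫⁻ t, (∫⁻ ω, ENNReal.ofReal
        |(n:ℝ)⁻¹ * (∑ i : Fin n, if ⟪θ, X i ω⟫ ≤ t then (1:ℝ) else 0)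
          - (μ {x | ⟪θ, x⟫ ≤ t}).toReal| ∂P) ∂volume
      ≤ ENNReal.ofReal 2 * ENNReal.ofReal ((2 * Real.sqrt n)⁻¹) := by
  have hballm : MeasurableSet (Metric.closedBall (0 : Euc d) 1) :=
    Metric.isClosed_closedBall.measurableSet
  have hae : ∀ᵐ ω ∂P, ∀ i, X i ω ∈ Metric.closedBall (0 : Euc d) 1 := by
    rw [ae_all_iff]
    intro i
    rw [ae_iff]
    have : {ω | ¬ X i ω ∈ Metric.closedBall (0 : Euc d) 1}
        = (X i) ⁻¹' (Metric.closedBall (0 : Euc d) 1)ᶜ := rfl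
    rw [this, ← Measure.map_apply (hX i) hballm.compl, hlaw i,
      measure_compl hballm (measure_ne_top _ _), hball, measure_univ, tsub_self]
  have hinner : ∀ x : Euc d, x ∈ Metric.closedBall (0 : Euc d) 1 → |⟪θ, x⟫| ≤ 1 := by
    intro x hx
    calc |⟪θ, x⟫| ≤ ‖θ‖ * ‖x‖ := abs_real_inner_le_norm θ x
      _ ≤ 1 * 1 := by
          apply mul_le_mul hθ ?_ (norm_nonneg x) zero_le_one
          rwa [mem_closedBall_zero_iff] at hx
      _ = 1 := by norm_num
  calc ∫⁻ t, (∫⁻ ω, ENNReal.ofReal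
        |(n:ℝ)⁻¹ * (∑ i : Fin n, if ⟪θ, X i ω⟫ ≤ t then (1:ℝ) else 0)
          - (μ {x | ⟪θ, x⟫ ≤ t}).toReal| ∂P) ∂volume
      ≤ ∫⁻ t, (Icc (-1:ℝ) 1).indicator
          (fun _ => ENNReal.ofReal ((2 * Real.sqrt n)⁻¹)) t ∂volume := by
        apply lintegral_mono
        intro t
        by_cases ht : t ∈ Icc (-1:ℝ) 1
        · rw [indicator_of_mem ht]
          exact step2_pointwise P μ X hn hX hiid hlaw θ t
        · rw [indicator_of_notMem ht]
          rw [mem_Icc, not_and_or] at ht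
          have hzero : ∀ᵐ ω ∂P, ENNReal.ofReal
              |(n:ℝ)⁻¹ * (∑ i : Fin n, if ⟪θ, X i ω⟫ ≤ t then (1:ℝ) else 0)
                - (μ {x | ⟪θ, x⟫ ≤ t}).toReal| = 0 := by
            filter_upwards [hae] with ω hω
            rcases ht with ht | ht
            · -- t < -1 : everything is 0
              push_neg at ht
              have hsum : ∀ i : Fin n, (if ⟪θ, X i ω⟫ ≤ t then (1:ℝ) else 0) = 0 := by
                intro i
                rw [if_neg]
                intro hc
                have := hinner _ (hω i)
                rw [abs_le] at this
                linarith
              have hμ0 : μ {x | ⟪θ, x⟫ ≤ t} = 0 := by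
                have hsub : {x : Euc d | ⟪θ, x⟫ ≤ t} ⊆ (Metric.closedBall (0 : Euc d) 1)ᶜ := by
                  intro x hx hxball
                  have := hinner x hxball
                  rw [abs_le] at this
                  exact absurd hx (by simp only [mem_setOf_eq]; push_neg; linarith)
                refine measure_mono_null hsub ?_
                rw [measure_compl hballm (measure_ne_top _ _), hball, measure_univ, tsub_self]
              rw [Finset.sum_congr rfl (fun i _ => hsum i), hμ0]
              simp
            · -- 1 < t : everything is 1
              push_neg at ht
              have hsum : ∀ i : Fin n, (if ⟪θ, X i ω⟫ ≤ t then (1:ℝ) else 0) = 1 := by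
                intro i
                rw [if_pos]
                have := hinner _ (hω i)
                rw [abs_le] at this
                linarith
              have hμ1 : μ {x | ⟪θ, x⟫ ≤ t} = 1 := by
                refine le_antisymm prob_le_one ?_
                rw [← hball]
                apply measure_mono
                intro x hx
                have := hinner x hx
                rw [abs_le] at this
                simp only [mem_setOf_eq]
                linarith
              rw [Finset.sum_congr rfl (fun i _ => hsum i), hμ1]
              have hn0 : (n:ℝ) ≠ 0 := by
                exact_mod_cast Nat.one_le_iff_ne_zero.mp hn
              simp [hn0]
          refine le_of_eq ?_
          have h0 := lintegral_congr_ae hzero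
          simpa using h0
    _ = ENNReal.ofReal ((2 * Real.sqrt n)⁻¹) * volume (Icc (-1:ℝ) 1) := by
        rw [lintegral_indicator measurableSet_Icc, setLIntegral_const]
    _ = ENNReal.ofReal 2 * ENNReal.ofReal ((2 * Real.sqrt n)⁻¹) := by
        rw [Real.volume_Icc, mul_comm]
        norm_num
end Main


/-- the G function -/
def Gfun {d n : ℕ} {Ω : Type} [MeasurableSpace Ω] (μ : Measure (Euc d))
    (X : Fin n → Ω → Euc d) (ω : Ω) (θ : Euc d) (t : ℝ) : ℝ≥0∞ :=
  ENNReal.ofReal |(n:ℝ)⁻¹ * (∑ i : Fin n, if ⟪θ, X i ω⟫ ≤ t then (1:ℝ) else 0)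
    - (μ {x | ⟪θ, x⟫ ≤ t}).toReal|

instance stdGaussian_isProb (d : ℕ) : IsProbabilityMeasure (stdGaussian d) := by
  rw [_root_.stdGaussian]
  exact Measure.isProbabilityMeasure_map
    ((EuclideanSpace.equiv (Fin d) ℝ).symm.continuous.measurable.aemeasurable)

lemma norm_inv_smul_le_one {d : ℕ} (x : Euc d) : ‖‖x‖⁻¹ • x‖ ≤ 1 := by
  rw [norm_smul, norm_inv, norm_norm]
  rcases eq_or_ne ‖x‖ 0 with h | h
  · rw [h]; norm_num
  · rw [inv_mul_cancel₀ h]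

lemma measurable_normalize (d : ℕ) : Measurable fun x : Euc d => ‖x‖⁻¹ • x :=
  (measurable_norm.inv).smul measurable_id

instance sphereUniform_isProb (d : ℕ) : IsProbabilityMeasure (sphereUniform d) := by
  rw [sphereUniform]
  exact Measure.isProbabilityMeasure_map (measurable_normalize d).aemeasurable

lemma sphereUniform_ae_norm_le (d : ℕ) : ∀ᵐ θ ∂(sphereUniform d), ‖θ‖ ≤ 1 := by
  rw [sphereUniform, ae_map_iff (measurable_normalize d).aemeasurable]
  · exact ae_of_all _ fun x => norm_inv_smul_le_one x
  · exact measurableSet_le measurable_norm measurable_const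

section Meas
variable {d n : ℕ} {Ω : Type} [MeasurableSpace Ω] (μ : Measure (Euc d))
  [IsProbabilityMeasure μ] (X : Fin n → Ω → Euc d)

lemma measurable_inner2 {d : ℕ} : Measurable fun p : Euc d × Euc d => ⟪p.1, p.2⟫ :=
  continuous_inner.measurable

lemma measurable_F : Measurable (fun q : Euc d × ℝ => μ {x | ⟪q.1, x⟫ ≤ q.2}) := by
  set T : Set ((Euc d × ℝ) × Euc d) := {r | ⟪r.1.1, r.2⟫ ≤ r.1.2} with hTdef
  have hT : MeasurableSet T := by
    apply measurableSet_le
    · exact measurable_inner2.comp ((measurable_fst.fst).prodMk measurable_snd)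
    · exact measurable_fst.snd
  have key : ∀ q : Euc d × ℝ, μ {x | ⟪q.1, x⟫ ≤ q.2}
      = ∫⁻ x, T.indicator (fun _ => (1:ℝ≥0∞)) (q, x) ∂μ := by
    intro q
    have hsl : ∀ x, T.indicator (fun _ => (1:ℝ≥0∞)) (q, x)
        = ({x : Euc d | ⟪q.1, x⟫ ≤ q.2}).indicator (fun _ => (1:ℝ≥0∞)) x := by
      intro x
      by_cases h : ⟪q.1, x⟫ ≤ q.2
      · rw [indicator_of_mem (show (q, x) ∈ T from h),
          indicator_of_mem (show x ∈ _ from h)]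
      · rw [indicator_of_notMem (show (q, x) ∉ T from h),
          indicator_of_notMem (show x ∉ _ from h)]
    have hsm : MeasurableSet {x : Euc d | ⟪q.1, x⟫ ≤ q.2} :=
      measurableSet_le ((continuous_const.inner continuous_id).measurable) measurable_const
    rw [lintegral_congr hsl, lintegral_indicator hsm]
    simp [Measure.restrict_apply_univ]
  have : (fun q : Euc d × ℝ => μ {x | ⟪q.1, x⟫ ≤ q.2})
      = fun q => ∫⁻ x, T.indicator (fun _ => (1:ℝ≥0∞)) (q, x) ∂μ := funext key
  rw [this]
  exact (measurable_one.indicator hT).lintegral_prod_right'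

lemma measurable_G (hX : ∀ i, Measurable (X i)) : Measurable (fun q : (Ω × Euc d) × ℝ => Gfun μ X q.1.1 q.1.2 q.2) := by
  apply Measurable.ennreal_ofReal
  apply Measurable.abs
  apply Measurable.sub
  · apply Measurable.const_mul
    apply Finset.measurable_sum
    intro i _
    have hA : MeasurableSet {q : (Ω × Euc d) × ℝ | ⟪q.1.2, X i q.1.1⟫ ≤ q.2} := by
      apply measurableSet_le
      · exact measurable_inner2.comp
          ((measurable_fst.snd).prodMk ((hX i).comp measurable_fst.fst))
      · exact measurable_snd
    exact Measurable.ite hA measurable_const measurable_const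
  · exact (measurable_F μ |>.comp ((measurable_fst.snd).prodMk measurable_snd)).ennreal_toReal

end Meas


end Aux

/-- There is a universal constant ... -/
theorem sliced_wasserstein_rate :
    ∃ C : ℝ, 0 < C ∧
      ∀ (d : ℕ), 1 ≤ d →
      ∀ (μ : Measure (Euc d)), IsProbabilityMeasure μ →
        μ (Metric.closedBall (0 : Euc d) 1) = 1 →
      ∀ (n : ℕ), 1 ≤ n →
      ∀ (Ω : Type) (mΩ : MeasurableSpace Ω) (P : Measure Ω), IsProbabilityMeasure P →
      ∀ (X : Fin n → Ω → Euc d), (∀ i, Measurable (X i)) →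
        ProbabilityTheory.iIndepFun X P →
        (∀ i, P.map (X i) = μ) →
        ∫⁻ ω, slicedWassersteinOne (empiricalMeasure n X ω) μ ∂P ≤
          ENNReal.ofReal (C * (n : ℝ) ^ (-(1 : ℝ) / 2)) := by
  refine ⟨1, one_pos, ?_⟩
  intro d hd μ hμ hball n hn Ω mΩ P hP X hX hiid hlaw
  haveI := hμ
  haveI := hP
  have hGm := measurable_G μ X hX
  have hn0 : (0:ℝ) < n := by exact_mod_cast hn
  have hs0 : 0 < Real.sqrt n := Real.sqrt_pos.2 hn0
  calc ∫⁻ ω, slicedWassersteinOne (empiricalMeasure n X ω) μ ∂P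
      ≤ ∫⁻ ω, ∫⁻ θ, (∫⁻ t, Gfun μ X ω θ t) ∂(sphereUniform d) ∂P := by
        apply lintegral_mono
        intro ω
        unfold slicedWassersteinOne
        apply lintegral_mono
        intro θ
        exact step1 X hn μ ω θ
    _ = ∫⁻ θ, ∫⁻ ω, (∫⁻ t, Gfun μ X ω θ t) ∂P ∂(sphereUniform d) := by
        apply lintegral_lintegral_swap
        exact (hGm.lintegral_prod_right').aemeasurable
    _ = ∫⁻ θ, ∫⁻ t, ∫⁻ ω, Gfun μ X ω θ t ∂P ∂volume ∂(sphereUniform d) := by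
        apply lintegral_congr
        intro θ
        apply lintegral_lintegral_swap
        exact (hGm.comp ((measurable_fst.prodMk measurable_const).prodMk
          measurable_snd)).aemeasurable
    _ ≤ ∫⁻ _θ, ENNReal.ofReal 2 * ENNReal.ofReal ((2 * Real.sqrt n)⁻¹) ∂(sphereUniform d) := by
        apply lintegral_mono_ae
        filter_upwards [sphereUniform_ae_norm_le d] with θ hθ
        exact step2_t P μ X hn hX hiid hlaw hball θ hθ
    _ = ENNReal.ofReal 2 * ENNReal.ofReal ((2 * Real.sqrt n)⁻¹) := by
        rw [lintegral_const, measure_univ, mul_one]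
    _ ≤ ENNReal.ofReal (1 * (n : ℝ) ^ (-(1 : ℝ) / 2)) := by
        rw [← ENNReal.ofReal_mul (by norm_num)]
        apply ENNReal.ofReal_le_ofReal
        rw [one_mul]
        have h1 : (2:ℝ) * (2 * Real.sqrt n)⁻¹ = (Real.sqrt n)⁻¹ := by
          field_simp
        rw [h1, show (-(1:ℝ)/2) = -(1/2 : ℝ) by norm_num,
          Real.rpow_neg (Nat.cast_nonneg n), ← Real.sqrt_eq_rpow]
end
end
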